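/- arXiv:math/0309291 — 10 statements merged into one kernel-verified Lean document; each statement's English description precedes it below -/
import Mathlib

section
/- Let (X,d) be a metric space and γ : T → X a weakly-geodesic ray. Then for every y ∈ X the limit lim_{t→∞, t∈T} (d(γ(t),y) − t) exists in ℝ; consequently, for every pair y, z ∈ X the limit lim_{t→∞, t∈T} (d(γ(t),y) − d(γ(t),z)) exists in ℝ. -/
open Filter Topology

/-- `T` is a valid domain for a ray: an unbounded subset of `[0,∞)` containing `0`. -/
def IsRayDomain (T : Set ℝ) : Prop :=
  T ⊆ Set.Ici (0 : ℝ) ∧ 0 ∈ T ∧ ∀ M : ℝ, ∃ t ∈ T, M < t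

/-- A weakly-geodesic ray for the distance function `d`. -/
def WeaklyGeodesicRay {X : Type*} (d : X → X → ℝ) (T : Set ℝ) (γ : ℝ → X) : Prop :=
  ∀ y : X, ∀ ε : ℝ, 0 < ε → ∃ N : ℝ, ∀ s ∈ T, ∀ t ∈ T, N ≤ s → N ≤ t →
    |d (γ t) (γ 0) - t| < ε ∧ |d (γ t) y - d (γ s) y - (t - s)| < ε

/-- An almost-geodesic ray for the distance function `d`. -/
def AlmostGeodesicRay {X : Type*} (d : X → X → ℝ) (T : Set ℝ) (γ : ℝ → X) : Prop :=
  ∀ ε : ℝ, 0 < ε → ∃ N : ℝ, ∀ s ∈ T, ∀ t ∈ T, N ≤ s → s ≤ t →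
    |d (γ t) (γ s) + d (γ s) (γ 0) - t| < ε

/-- A geodesic ray for the distance function `d`. -/
def GeodesicRay {X : Type*} (d : X → X → ℝ) (T : Set ℝ) (γ : ℝ → X) : Prop :=
  ∀ s ∈ T, ∀ t ∈ T, d (γ s) (γ t) = |s - t|

/-- `L` is the limit of `d(γ(t),y) - d(γ(t),z)` as `t → ∞` along `T`. -/
def RayLimit {X : Type*} (d : X → X → ℝ) (T : Set ℝ) (γ : ℝ → X) (y z : X) (L : ℝ) : Prop :=
  Tendsto (fun t => d (γ t) y - d (γ t) z) (atTop ⊓ 𝓟 T) (𝓝 L)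

theorem Filter.exists_tendsto_of_eventually_dist_lt {α β : Type*} [PseudoMetricSpace β]
    [CompleteSpace β] [Nonempty β] {l : Filter α} {f : α → β}
    (h : ∀ ε > 0, ∀ᶠ p in l ×ˢ l, dist (f p.1) (f p.2) < ε) :
    ∃ L, Tendsto f l (𝓝 L) := by
  rcases l.eq_or_neBot with rfl | hl
  · exact ⟨Classical.arbitrary β, tendsto_bot⟩
  · exact cauchy_map_iff_exists_tendsto.1
      (cauchy_map_iff.2 ⟨hl, Metric.uniformity_basis_dist.tendsto_right_iff.2 h⟩)

theorem WeaklyGeodesicRay.exists_tendsto_sub {X : Type*} {d : X → X → ℝ} {T : Set ℝ}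
    {γ : ℝ → X} (hγ : WeaklyGeodesicRay d T γ) (y : X) :
    ∃ L, Tendsto (fun t => d (γ t) y - t) (atTop ⊓ 𝓟 T) (𝓝 L) := by
  refine exists_tendsto_of_eventually_dist_lt fun ε hε => ?_
  obtain ⟨N, hN⟩ := hγ y ε hε
  have hlate : ∀ᶠ t in atTop ⊓ 𝓟 T, N ≤ t ∧ t ∈ T :=
    eventually_inf_principal.2 ((eventually_ge_atTop N).mono fun _ hN hT => ⟨hN, hT⟩)
  filter_upwards [hlate.prod_mk hlate] with ⟨s, t⟩ ⟨⟨hNs, hs⟩, hNt, ht⟩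
  rw [Real.dist_eq, show d (γ s) y - s - (d (γ t) y - t) = d (γ s) y - d (γ t) y - (s - t) by ring]
  exact (hN t ht s hs hNt hNs).2

theorem stmt0_general {X : Type*} [MetricSpace X] (T : Set ℝ) (γ : ℝ → X)
    (hγ : WeaklyGeodesicRay (fun x y => dist x y) T γ) :
    (∀ y : X, ∃ L : ℝ, Tendsto (fun t => dist (γ t) y - t) (atTop ⊓ 𝓟 T) (𝓝 L)) ∧
    (∀ y z : X, ∃ L : ℝ, RayLimit (fun x y => dist x y) T γ y z L) := by
  refine ⟨hγ.exists_tendsto_sub, fun y z => ?_⟩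
  obtain ⟨Ly, hLy⟩ := hγ.exists_tendsto_sub y
  obtain ⟨Lz, hLz⟩ := hγ.exists_tendsto_sub z
  exact ⟨Ly - Lz, (hLy.sub hLz).congr fun t => by ring⟩

/-- For a weakly-geodesic ray `γ : T → X` in a metric space, the limit
`lim_{t→∞, t∈T} (d(γ(t),y) − t)` exists for every `y`, and consequently the limit
`lim_{t→∞, t∈T} (d(γ(t),y) − d(γ(t),z))` exists for every pair `y, z`. -/
theorem stmt0 {X : Type*} [MetricSpace X] (T : Set ℝ) (γ : ℝ → X)
    (hT : IsRayDomain T)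
    (hγ : WeaklyGeodesicRay (fun x y => dist x y) T γ) :
    (∀ y : X, ∃ L : ℝ, Tendsto (fun t => dist (γ t) y - t) (atTop ⊓ 𝓟 T) (𝓝 L)) ∧
    (∀ y z : X, ∃ L : ℝ, RayLimit (fun x y => dist x y) T γ y z L) :=
  stmt0_general T γ hγ
end

section
/- Let (X,d) be a proper metric space (every closed ball of finite radius is compact) and let (w_n)_{n∈ℕ} be a sequence in X such that the set {d(w_n, w_0) : n ∈ ℕ} is unbounded and such that for every y ∈ X the limit L(y) = lim_{n→∞} (d(w_n,w_0) − d(w_n,y)) exists in ℝ. Then there is a strictly increasing sequence of indices n_0 = 0 < n_1 < n_2 < ⋯ with d(w_{n_k}, w_0) strictly increasing in k such that, setting T = {d(w_{n_k},w_0) : k ∈ ℕ} and defining γ : T → X by γ(d(w_{n_k},w_0)) = w_{n_k}, the map γ is a weakly-geodesic ray satisfying d(γ(t),γ(0)) = t for all t ∈ T and lim_{t→∞, t∈T} (d(γ(t),γ(0)) − d(γ(t),y)) = L(y) for every y ∈ X. -/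
open Filter Topology

/-- In a proper metric space, a sequence `w` with `d(w_n, w_0)` unbounded,
such that `d(w_n,w_0) − d(w_n,y)` converges for every `y`, admits a subsequence
`w_{n_k}` (with `n_0 = 0`, `d(w_{n_k},w_0)` strictly increasing) which yields a
weakly-geodesic ray `γ` on `T = {d(w_{n_k},w_0)}` with `γ(d(w_{n_k},w_0)) = w_{n_k}`,
`d(γ(t),γ(0)) = t`, and the same limits `L(y)`. -/
theorem stmt1 {X : Type*} [MetricSpace X] [ProperSpace X]
    (w : ℕ → X)
    (hw : ∀ M : ℝ, ∃ m : ℕ, M < dist (w m) (w 0))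
    (L : X → ℝ)
    (hL : ∀ y : X, Tendsto (fun m => dist (w m) (w 0) - dist (w m) y) atTop (𝓝 (L y))) :
    ∃ n : ℕ → ℕ, n 0 = 0 ∧ StrictMono n ∧
      StrictMono (fun k => dist (w (n k)) (w 0)) ∧
      ∃ γ : ℝ → X,
        (∀ k : ℕ, γ (dist (w (n k)) (w 0)) = w (n k)) ∧
        IsRayDomain (Set.range fun k : ℕ => dist (w (n k)) (w 0)) ∧
        WeaklyGeodesicRay (fun x y => dist x y)
          (Set.range fun k : ℕ => dist (w (n k)) (w 0)) γ ∧
        (∀ t ∈ (Set.range fun k : ℕ => dist (w (n k)) (w 0)), dist (γ t) (γ 0) = t) ∧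
        ∀ y : X, Tendsto (fun t => dist (γ t) (γ 0) - dist (γ t) y)
          (atTop ⊓ 𝓟 (Set.range fun k : ℕ => dist (w (n k)) (w 0))) (𝓝 (L y)) := by
  classical
  -- recursive step: find a later index with strictly larger distance, exceeding k
  have key : ∀ (k j : ℕ), ∃ m, j < m ∧ dist (w j) (w 0) < dist (w m) (w 0) ∧
      (k : ℝ) < dist (w m) (w 0) := by
    intro k j
    obtain ⟨m, hm⟩ := hw (max (k : ℝ)
      ((Finset.range (j+1)).sup' (by simp) (fun i => dist (w i) (w 0))))
    have hjS : dist (w j) (w 0) ≤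
        (Finset.range (j+1)).sup' (by simp) (fun i => dist (w i) (w 0)) :=
      Finset.le_sup' (fun i => dist (w i) (w 0)) (Finset.mem_range.2 (Nat.lt_succ_self j))
    have hmj : j < m := by
      by_contra h
      push_neg at h
      have h1 : dist (w m) (w 0) ≤
          (Finset.range (j+1)).sup' (by simp) (fun i => dist (w i) (w 0)) :=
        Finset.le_sup' (fun i => dist (w i) (w 0)) (Finset.mem_range.2 (Nat.lt_succ_of_le h))
      have h2 := le_max_right (k : ℝ)
        ((Finset.range (j+1)).sup' (by simp) (fun i => dist (w i) (w 0)))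
      linarith
    exact ⟨m, hmj, lt_of_le_of_lt (hjS.trans (le_max_right _ _)) hm,
      lt_of_le_of_lt (le_max_left _ _) hm⟩
  choose f hf1 hf2 hf3 using key
  obtain ⟨n, hn0, hns⟩ : ∃ n : ℕ → ℕ, n 0 = 0 ∧ ∀ k, n (k+1) = f k (n k) :=
    ⟨fun k => Nat.rec 0 (fun k ih => f k ih) k, rfl, fun k => rfl⟩
  have hnmono : StrictMono n := strictMono_nat_of_lt_succ (fun k => by
    rw [hns k]; exact hf1 k (n k))
  have htmono : StrictMono (fun k => dist (w (n k)) (w 0)) :=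
    strictMono_nat_of_lt_succ (fun k => by
      simp only [hns k]; exact hf2 k (n k))
  have htgrow : ∀ k : ℕ, (k : ℝ) < dist (w (n (k+1))) (w 0) := fun k => by
    rw [hns k]; exact hf3 k (n k)
  obtain ⟨γ, hγ⟩ : ∃ γ : ℝ → X, ∀ k : ℕ, γ (dist (w (n k)) (w 0)) = w (n k) := by
    refine ⟨fun r => if h : ∃ k, dist (w (n k)) (w 0) = r then w (n h.choose) else w 0, ?_⟩
    intro k
    have h : ∃ j, dist (w (n j)) (w 0) = dist (w (n k)) (w 0) := ⟨k, rfl⟩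
    have hc : h.choose = k := htmono.injective h.choose_spec
    simp only [dif_pos h, hc]
  have hγ0 : γ 0 = w 0 := by
    have h := hγ 0
    rw [hn0, dist_self] at h
    rw [h]
  have hdistT : ∀ t' ∈ (Set.range fun k : ℕ => dist (w (n k)) (w 0)),
      dist (γ t') (γ 0) = t' := by
    rintro t' ⟨k, rfl⟩
    simp only [hγ k, hγ0]
  have hmain : ∀ y : X, ∀ ε : ℝ, 0 < ε → ∃ N : ℝ,
      ∀ t' ∈ (Set.range fun k : ℕ => dist (w (n k)) (w 0)), N ≤ t' →
      |t' - dist (γ t') y - L y| < ε := by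
    intro y ε hε
    obtain ⟨K, hK⟩ := (Metric.tendsto_atTop.1 (hL y)) ε hε
    refine ⟨dist (w (n K)) (w 0), ?_⟩
    rintro t' ⟨k, rfl⟩ hNt'
    have hkK : K ≤ k := by
      by_contra h
      push_neg at h
      exact absurd hNt' (not_le.2 (htmono h))
    have hKnk : K ≤ n k := hkK.trans hnmono.le_apply
    have h := hK (n k) hKnk
    rw [Real.dist_eq] at h
    simpa only [hγ k] using h
  refine ⟨n, hn0, hnmono, htmono, γ, hγ, ⟨?_, ?_, ?_⟩, ?_, hdistT, ?_⟩
  · rintro t' ⟨k, rfl⟩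
    exact dist_nonneg
  · exact ⟨0, by show dist (w (n 0)) (w 0) = 0; rw [hn0, dist_self]⟩
  · intro M
    exact ⟨dist (w (n (⌈M⌉₊ + 1))) (w 0), ⟨⌈M⌉₊ + 1, rfl⟩,
      lt_of_le_of_lt (Nat.le_ceil M) (htgrow ⌈M⌉₊)⟩
  · -- weakly geodesic
    intro y ε hε
    obtain ⟨N, hN⟩ := hmain y (ε/2) (by linarith)
    refine ⟨N, fun s hs t' ht' hNs hNt' => ⟨?_, ?_⟩⟩
    · show |dist (γ t') (γ 0) - t'| < ε
      rw [hdistT t' ht', sub_self, abs_zero]; exact hε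
    · show |dist (γ t') y - dist (γ s) y - (t' - s)| < ε
      have h1 := hN s hs hNs
      have h2 := hN t' ht' hNt'
      have heq : dist (γ t') y - dist (γ s) y - (t' - s)
          = (s - dist (γ s) y - L y) - (t' - dist (γ t') y - L y) := by ring
      calc |dist (γ t') y - dist (γ s) y - (t' - s)|
          = |(s - dist (γ s) y - L y) - (t' - dist (γ t') y - L y)| := by rw [heq]
        _ ≤ |s - dist (γ s) y - L y| + |t' - dist (γ t') y - L y| := abs_sub _ _
        _ < ε := by linarith
  · intro y
    rw [Metric.tendsto_nhds]
    intro ε hε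
    obtain ⟨N, hN⟩ := hmain y ε hε
    rw [eventually_inf_principal]
    filter_upwards [eventually_ge_atTop N] with t' hNt' ht'
    rw [Real.dist_eq, hdistT t' ht']
    exact hN t' ht' hNt'
end

section
/- Let (X,d) be a metric space and γ : T → X an almost-geodesic ray. Then γ is a weakly-geodesic ray. -/
open Filter Topology

/-- Every almost-geodesic ray in a metric space is a weakly-geodesic ray. -/
theorem stmt2 {X : Type*} [MetricSpace X] (T : Set ℝ) (γ : ℝ → X)
    (hT : IsRayDomain T)
    (hγ : AlmostGeodesicRay (fun x y => dist x y) T γ) :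
    WeaklyGeodesicRay (fun x y => dist x y) T γ := by
  obtain ⟨hT0, h0T, hTub⟩ := hT
  intro y ε hε
  obtain ⟨N₁, hN₁⟩ := hγ (ε/4) (by linarith)
  obtain ⟨h, hh⟩ : ∃ h : ℝ → ℝ, ∀ u, h u = dist (γ u) y - u := ⟨_, fun _ => rfl⟩
  have mono : ∀ s ∈ T, ∀ t ∈ T, N₁ ≤ s → s ≤ t → h t ≤ h s + ε/2 := by
    intro s hs t ht hNs hst
    have h1 := abs_lt.mp (hN₁ s hs t ht hNs hst)
    have h2 := hN₁ s hs s hs hNs le_rfl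
    simp only [dist_self, zero_add] at h2
    have h2' := abs_lt.mp h2
    have htri : dist (γ t) y ≤ dist (γ t) (γ s) + dist (γ s) y := dist_triangle _ _ _
    rw [hh, hh]
    have hd : (0:ℝ) ≤ dist (γ s) (γ 0) := dist_nonneg
    linarith [h1.2, h2'.1]
  have lb : ∀ t ∈ T, N₁ ≤ t → -(ε/4) - dist (γ 0) y ≤ h t := by
    intro t ht hNt
    have h2 := hN₁ t ht t ht hNt le_rfl
    simp only [dist_self, zero_add] at h2
    have h3 := abs_lt.mp h2
    have htri : dist (γ t) (γ 0) ≤ dist (γ t) y + dist y (γ 0) := dist_triangle _ _ _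
    have hcomm : dist y (γ 0) = dist (γ 0) y := dist_comm _ _
    rw [hh]
    linarith [h3.1]
  obtain ⟨t₁, ht₁T, ht₁⟩ := hTub N₁
  obtain ⟨S, hS⟩ : ∃ S : Set ℝ, S = {v : ℝ | ∃ s ∈ T, N₁ ≤ s ∧ v = h s} := ⟨_, rfl⟩
  have hne : S.Nonempty := ⟨h t₁, hS ▸ ⟨t₁, ht₁T, le_of_lt ht₁, rfl⟩⟩
  have hbdd : BddBelow S := ⟨-(ε/4) - dist (γ 0) y, by
    rw [hS]; rintro v ⟨s, hs, hNs, rfl⟩; exact lb s hs hNs⟩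
  have hlt : sInf S < sInf S + ε/4 := by linarith
  obtain ⟨v, hvS, hv⟩ := exists_lt_of_csInf_lt hne hlt
  rw [hS] at hvS
  obtain ⟨s₀, hs₀T, hNs₀, rfl⟩ := hvS
  refine ⟨s₀, fun s hs t ht hs₀s hs₀t => ?_⟩
  have hN₁s : N₁ ≤ s := le_trans hNs₀ hs₀s
  have hN₁t : N₁ ≤ t := le_trans hNs₀ hs₀t
  constructor
  · have h2 := hN₁ t ht t ht hN₁t le_rfl
    simp only [dist_self, zero_add] at h2
    show |dist (γ t) (γ 0) - t| < ε
    have h2' := abs_lt.mp h2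
    rw [abs_lt]; constructor <;> linarith
  · have hsS : h s ∈ S := hS ▸ ⟨s, hs, hN₁s, rfl⟩
    have htS : h t ∈ S := hS ▸ ⟨t, ht, hN₁t, rfl⟩
    have h1 : sInf S ≤ h s := csInf_le hbdd hsS
    have h2 : sInf S ≤ h t := csInf_le hbdd htS
    have h3 : h s ≤ h s₀ + ε/2 := mono s₀ hs₀T s hs hNs₀ hs₀s
    have h4 : h t ≤ h s₀ + ε/2 := mono s₀ hs₀T t ht hNs₀ hs₀t
    have key : |h t - h s| < ε := by
      rw [abs_lt]; constructor <;> linarith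
    have heq : dist (γ t) y - dist (γ s) y - (t - s) = h t - h s := by
      rw [hh, hh]; ring
    show |dist (γ t) y - dist (γ s) y - (t - s)| < ε
    rw [heq]; exact key
end

section
/- Let Γ = (V,E) be a connected graph with path metric d, and let γ' : T' → V be an almost-geodesic ray. Then there exists a geodesic ray γ : T → V such that for all y, z ∈ V, lim_{t→∞, t∈T} (d(γ(t),y) − d(γ(t),z)) = lim_{t→∞, t∈T'} (d(γ'(t),y) − d(γ'(t),z)) (both limits existing in ℝ). In other words, every Busemann point of the metric boundary of a graph with the path metric is the limit of a geodesic ray. -/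
open Filter Topology

/-- Minimal paths from `a` to `c` and from `b` to `c` share a tail: there is a vertex
`z ≠ c` lying simultaneously on a minimal path from `a` to `c` and on one from `b` to `c`. -/
def ShareTail {V : Type*} (d : V → V → ℕ) (a b c : V) : Prop :=
  ∃ z, z ≠ c ∧ d a z + d z c = d a c ∧ d b z + d z c = d b c

/-- No minimal paths from apex `x` to `y` and from `x` to `z` share a vertex other than `x`. -/
def RigidApex {V : Type*} (d : V → V → ℕ) (x y z : V) : Prop :=
  ∀ w, w ≠ x → ¬(d x w + d w y = d x y ∧ d x w + d w z = d x z)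

/-- A rigid triple: three distinct vertices, rigid at each apex. -/
def RigidTriple {V : Type*} (d : V → V → ℕ) (x y z : V) : Prop :=
  x ≠ y ∧ y ≠ z ∧ x ≠ z ∧
    RigidApex d x y z ∧ RigidApex d y x z ∧ RigidApex d z x y


/-! Distances in a graph are integers, so from some time `t₀` on an almost-geodesic ray is exactly
aligned: `d(γ'(t₀), γ'(t)) = d(γ'(t₀), γ'(s)) + d(γ'(s), γ'(t))` for `t₀ ≤ s ≤ t`. Walking greedily
from `γ'(t₀)` towards the nearest point of the ray still ahead gives a geodesic ray passing through
every `γ'(t)`, `t ≥ t₀`. Along any geodesic ray `c` the integer `d(c n, y) - n` is non-increasing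
and bounded below, hence eventually constant, and both rays see the same eventual values. -/

lemma Int.exists_eventually_eq_of_antitone {f : ℕ → ℤ} (hf : Antitone f) {b : ℤ}
    (hb : ∀ n, b ≤ f n) : ∃ β : ℤ, ∃ N : ℕ, ∀ n, N ≤ n → f n = β := by
  obtain ⟨_, ⟨N, rfl⟩, hleast⟩ := Int.exists_least_of_bdd (P := (· ∈ Set.range f))
    ⟨b, by rintro _ ⟨n, rfl⟩; exact hb n⟩ ⟨f 0, 0, rfl⟩
  exact ⟨f N, N, fun n hn => le_antisymm (hf hn) (hleast _ ⟨n, rfl⟩)⟩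

lemma Nat.eq_of_abs_sub_lt_one {a b : ℕ} (h : |(a : ℝ) - b| < 1) : a = b := by
  by_contra hne
  exact (Nat.pairwise_one_le_dist hne).not_gt h

namespace SimpleGraph

variable {V : Type*} {G : SimpleGraph V}

lemma Connected.exists_adj_dist_add_one (hconn : G.Connected) {v x : V} (h : 0 < G.dist v x) :
    ∃ w, G.Adj v w ∧ G.dist w x + 1 = G.dist v x := by
  obtain ⟨p, hp⟩ := hconn.exists_walk_length_eq_dist v x
  cases p with
  | nil => simp at h
  | @cons _ w _ hadj q =>
    refine ⟨w, hadj, le_antisymm ?_ ?_⟩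
    · rw [← hp, Walk.length_cons]
      exact Nat.add_le_add_right (dist_le q) 1
    · calc G.dist v x ≤ G.dist v w + G.dist w x := hconn.dist_triangle
        _ = G.dist w x + 1 := by rw [dist_eq_one_iff_adj.mpr hadj, add_comm]

def IsGeodesicSeq (G : SimpleGraph V) (c : ℕ → V) : Prop :=
  ∀ m n, m ≤ n → G.dist (c m) (c n) = n - m

lemma dist_le_of_forall_adj_succ {c : ℕ → V} (hc : ∀ n, G.Adj (c n) (c (n + 1))) (m k : ℕ) :
    G.dist (c m) (c (m + k)) ≤ k := by
  induction k with
  | zero => simp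
  | succ k ih =>
    have hstep : G.Reachable (c (m + k)) (c (m + k + 1)) := (hc (m + k)).reachable
    calc G.dist (c m) (c (m + (k + 1)))
        ≤ G.dist (c m) (c (m + k)) + G.dist (c (m + k)) (c (m + k + 1)) :=
          hstep.dist_triangle_right _
      _ ≤ k + 1 := by rw [dist_eq_one_iff_adj.mpr (hc (m + k))]; omega

lemma IsGeodesicSeq.exists_eventually_dist_sub_dist_eq (hconn : G.Connected) {c : ℕ → V}
    (hc : G.IsGeodesicSeq c) (y z : V) :
    ∃ L : ℤ, ∃ N : ℕ, ∀ n, N ≤ n → (G.dist (c n) y : ℤ) - G.dist (c n) z = L := by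
  have busemann (y : V) : ∃ β : ℤ, ∃ N : ℕ, ∀ n, N ≤ n → (G.dist (c n) y : ℤ) - n = β := by
    refine Int.exists_eventually_eq_of_antitone (b := -G.dist (c 0) y)
      (fun m n hmn => ?_) fun n => ?_
    · have htri : G.dist (c n) y ≤ G.dist (c n) (c m) + G.dist (c m) y := hconn.dist_triangle
      rw [dist_comm (u := c n) (v := c m), hc m n hmn] at htri
      omega
    · have htri : G.dist (c 0) (c n) ≤ G.dist (c 0) y + G.dist y (c n) := hconn.dist_triangle
      rw [hc 0 n n.zero_le, dist_comm (u := y)] at htri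
      omega
  obtain ⟨βy, Ny, hy⟩ := busemann y
  obtain ⟨βz, Nz, hz⟩ := busemann z
  exact ⟨βy - βz, max Ny Nz, fun n hn => by
    linarith [hy n (le_of_max_le_left hn), hz n (le_of_max_le_right hn)]⟩

def IsAlignedFrom (G : SimpleGraph V) (o : V) (A : Set V) : Prop :=
  ∀ x ∈ A, ∀ y ∈ A, G.dist o x ≤ G.dist o y → G.dist o x + G.dist x y = G.dist o y

variable {o : V} {A : Set V}

/-- Step towards the point of `A` beyond level `n` that is nearest to `o`. -/
lemma IsAlignedFrom.exists_adj_succ (hconn : G.Connected) (hA : G.IsAlignedFrom o A)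
    (hunb : ∀ n : ℕ, ∃ x ∈ A, n ≤ G.dist o x) {n : ℕ} {v : V}
    (hv : ∀ x ∈ A, n ≤ G.dist o x → n + G.dist v x = G.dist o x) :
    ∃ w, G.Adj v w ∧ ∀ x ∈ A, n + 1 ≤ G.dist o x → n + 1 + G.dist w x = G.dist o x := by
  classical
  have hex : ∃ m, ∃ x ∈ A, G.dist o x = m ∧ n + 1 ≤ m := by
    obtain ⟨x, hx, hnx⟩ := hunb (n + 1)
    exact ⟨_, x, hx, rfl, hnx⟩
  obtain ⟨x₀, hx₀, hx₀m, hnx₀⟩ := Nat.find_spec hex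
  have hnearest : ∀ x ∈ A, n + 1 ≤ G.dist o x → G.dist o x₀ ≤ G.dist o x :=
    fun x hx hnx => hx₀m ▸ Nat.find_min' hex ⟨x, hx, rfl, hnx⟩
  have hvx₀ := hv x₀ hx₀ (by omega)
  obtain ⟨w, hadj, hw⟩ := hconn.exists_adj_dist_add_one (v := v) (x := x₀) (by omega)
  refine ⟨w, hadj, fun x hx hnx => ?_⟩
  have hvx := hv x hx (by omega)
  have hx₀x := hA x₀ hx₀ x hx (hnearest x hx hnx)
  have hwx : G.dist w x ≤ G.dist w x₀ + G.dist x₀ x := hconn.dist_triangle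
  have hvwx : G.dist v x ≤ G.dist v w + G.dist w x := hconn.dist_triangle
  have hvw := dist_eq_one_iff_adj.mpr hadj
  omega

theorem IsAlignedFrom.exists_isGeodesicSeq (hconn : G.Connected) (hA : G.IsAlignedFrom o A)
    (hunb : ∀ n : ℕ, ∃ x ∈ A, n ≤ G.dist o x) :
    ∃ c : ℕ → V, G.IsGeodesicSeq c ∧ ∀ x ∈ A, c (G.dist o x) = x := by
  let OnGeodesics (n : ℕ) (v : V) : Prop :=
    ∀ x ∈ A, n ≤ G.dist o x → n + G.dist v x = G.dist o x
  choose next hnext using fun n (v : {v // OnGeodesics n v}) => hA.exists_adj_succ hconn hunb v.2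
  let c' (n : ℕ) : {v // OnGeodesics n v} :=
    Nat.rec ⟨o, fun x _ _ => zero_add _⟩ (fun n v => ⟨next n v, (hnext n v).2⟩) n
  let c (n : ℕ) : V := (c' n).1
  have hc (n : ℕ) : OnGeodesics n (c n) := (c' n).2
  have hadj (n : ℕ) : G.Adj (c n) (c (n + 1)) := (hnext n (c' n)).1
  refine ⟨c, fun m n hmn => le_antisymm ?_ ?_, fun x hx => ?_⟩
  · obtain ⟨k, rfl⟩ := Nat.exists_eq_add_of_le hmn
    simpa using dist_le_of_forall_adj_succ hadj m k
  · obtain ⟨x, hx, hnx⟩ := hunb n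
    have hm := hc m x hx (hmn.trans hnx)
    have hn := hc n x hx hnx
    have htri : G.dist (c m) x ≤ G.dist (c m) (c n) + G.dist (c n) x := hconn.dist_triangle
    omega
  · have := hc (G.dist o x) x hx le_rfl
    exact hconn.dist_eq_zero_iff.mp (by omega)

end SimpleGraph

lemma isRayDomain_range_natCast : IsRayDomain (Set.range ((↑) : ℕ → ℝ)) :=
  ⟨by rintro _ ⟨n, rfl⟩; exact Set.mem_Ici.mpr (Nat.cast_nonneg n), ⟨0, Nat.cast_zero⟩, fun M =>
    let ⟨n, hn⟩ := exists_nat_gt M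
    ⟨n, ⟨n, rfl⟩, hn⟩⟩

lemma SimpleGraph.IsGeodesicSeq.geodesicRay {V : Type*} {G : SimpleGraph V} {c : ℕ → V}
    (hc : G.IsGeodesicSeq c) :
    GeodesicRay (fun x y => (G.dist x y : ℝ)) (Set.range ((↑) : ℕ → ℝ)) (fun r => c ⌊r⌋₊) := by
  rintro _ ⟨m, rfl⟩ _ ⟨n, rfl⟩
  simp only [Nat.floor_natCast]
  rcases le_total m n with h | h
  · rw [hc m n h, abs_sub_comm, abs_of_nonneg (by simpa using h), Nat.cast_sub h]
  · rw [SimpleGraph.dist_comm, hc n m h, abs_of_nonneg (by simpa using h), Nat.cast_sub h]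

lemma rayLimit_of_forall_ge {X : Type*} {d : X → X → ℝ} {T : Set ℝ} {γ : ℝ → X} {y z : X}
    {L M : ℝ} (h : ∀ t ∈ T, M ≤ t → d (γ t) y - d (γ t) z = L) : RayLimit d T γ y z L :=
  tendsto_const_nhds.congr' <| by
    filter_upwards [inf_le_left (b := 𝓟 T) (Ici_mem_atTop M),
      inf_le_right (a := atTop) (mem_principal_self T)] with t hMt ht
    exact (h t ht hMt).symm

section AlmostGeodesic

variable {V : Type*} {G : SimpleGraph V} {T' : Set ℝ} {γ' : ℝ → V}

/-- Take `ε = 1/4`: both sides of the identity are natural numbers within `1/4` of `t`. -/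
lemma AlmostGeodesicRay.exists_forall_dist_add_dist_eq (hT' : ∀ M : ℝ, ∃ t ∈ T', M < t)
    (hγ' : AlmostGeodesicRay (fun x y => (G.dist x y : ℝ)) T' γ') :
    ∃ t₀ ∈ T', ∀ t ∈ T', t₀ ≤ t → |(G.dist (γ' t) (γ' 0) : ℝ) - t| < 1 / 4 ∧
      ∀ s ∈ T', t₀ ≤ s → s ≤ t →
        G.dist (γ' t) (γ' s) + G.dist (γ' s) (γ' 0) = G.dist (γ' t) (γ' 0) := by
  obtain ⟨N, hN⟩ := hγ' (1 / 4) (by norm_num)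
  obtain ⟨t₀, ht₀, hNt₀⟩ := hT' N
  have hclose : ∀ t ∈ T', t₀ ≤ t → |(G.dist (γ' t) (γ' 0) : ℝ) - t| < 1 / 4 :=
    fun t ht htt₀ => by simpa using hN t ht t ht (hNt₀.le.trans htt₀) le_rfl
  refine ⟨t₀, ht₀, fun t ht htt₀ => ⟨hclose t ht htt₀, fun s hs hst₀ hst => ?_⟩⟩
  apply Nat.eq_of_abs_sub_lt_one
  have h₁ := hN s hs t ht (hNt₀.le.trans hst₀) hst
  have h₂ := hclose t ht htt₀
  push_cast
  rw [abs_lt] at h₁ h₂ ⊢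
  constructor <;> linarith

lemma AlmostGeodesicRay.exists_isAlignedFrom (hT' : ∀ M : ℝ, ∃ t ∈ T', M < t)
    (hγ' : AlmostGeodesicRay (fun x y => (G.dist x y : ℝ)) T' γ') :
    ∃ t₀ : ℝ, G.IsAlignedFrom (γ' t₀) (γ' '' {t ∈ T' | t₀ ≤ t}) ∧
      ∀ n : ℕ, ∀ t ∈ T', t₀ + n ≤ t → n ≤ G.dist (γ' t₀) (γ' t) := by
  obtain ⟨t₀, ht₀, h⟩ := hγ'.exists_forall_dist_add_dist_eq hT'
  have hbase : ∀ t ∈ T', t₀ ≤ t →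
      G.dist (γ' t₀) (γ' t) + G.dist (γ' t₀) (γ' 0) = G.dist (γ' t) (γ' 0) := by
    intro t ht htt₀
    rw [SimpleGraph.dist_comm]
    exact (h t ht htt₀).2 t₀ ht₀ le_rfl htt₀
  refine ⟨t₀, ?_, fun n t ht hnt => ?_⟩
  · rintro _ ⟨s, ⟨hs, hst₀⟩, rfl⟩ _ ⟨t, ⟨ht, htt₀⟩, rfl⟩ hle
    have hs₀ := hbase s hs hst₀
    have ht₀' := hbase t ht htt₀
    rcases le_total s t with hst | hts
    · have hst' := (h t ht htt₀).2 s hs hst₀ hst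
      rw [SimpleGraph.dist_comm (u := γ' t)] at hst'
      omega
    · have hts' := (h s hs hst₀).2 t ht htt₀ hts
      omega
  · have htt₀ : t₀ ≤ t := by linarith [Nat.cast_nonneg (α := ℝ) n]
    have h₁ := (h t ht htt₀).1
    have h₂ := (h t₀ ht₀ le_rfl).1
    have h₃ : (G.dist (γ' t₀) (γ' t) : ℝ) + G.dist (γ' t₀) (γ' 0) = G.dist (γ' t) (γ' 0) := by
      exact_mod_cast hbase t ht htt₀
    rw [abs_lt] at h₁ h₂
    have hn : (n : ℝ) < G.dist (γ' t₀) (γ' t) + 1 := by linarith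
    exact Nat.lt_add_one_iff.mp (by exact_mod_cast hn)

end AlmostGeodesic

/-- In a connected graph with the path metric, every almost-geodesic ray
determines the same boundary point as some geodesic ray: there is a geodesic ray `γ`
whose limits `lim (d(γ(t),y) − d(γ(t),z))` all exist and agree with those of `γ'`. -/
theorem stmt3 {V : Type*} (G : SimpleGraph V) (hconn : G.Connected)
    (T' : Set ℝ) (γ' : ℝ → V) (hT' : IsRayDomain T')
    (hγ' : AlmostGeodesicRay (fun x y => (G.dist x y : ℝ)) T' γ') :
    ∃ T : Set ℝ, ∃ γ : ℝ → V, IsRayDomain T ∧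
      GeodesicRay (fun x y => (G.dist x y : ℝ)) T γ ∧
      ∀ y z : V, ∃ L : ℝ,
        RayLimit (fun x y => (G.dist x y : ℝ)) T γ y z L ∧
        RayLimit (fun x y => (G.dist x y : ℝ)) T' γ' y z L := by
  obtain ⟨t₀, hA, hgrowth⟩ := hγ'.exists_isAlignedFrom hT'.2.2
  have hunb (n : ℕ) : ∃ x ∈ γ' '' {t ∈ T' | t₀ ≤ t}, n ≤ G.dist (γ' t₀) x := by
    obtain ⟨t, ht, hnt⟩ := hT'.2.2 (t₀ + n)
    exact ⟨γ' t, ⟨t, ⟨ht, by linarith [Nat.cast_nonneg (α := ℝ) n]⟩, rfl⟩, hgrowth n t ht hnt.le⟩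
  obtain ⟨c, hc, hcA⟩ := hA.exists_isGeodesicSeq hconn hunb
  refine ⟨_, fun r => c ⌊r⌋₊, isRayDomain_range_natCast, hc.geodesicRay, fun y z => ?_⟩
  obtain ⟨L, N, hL⟩ := hc.exists_eventually_dist_sub_dist_eq hconn y z
  have hLreal (n : ℕ) (hn : N ≤ n) : (G.dist (c n) y : ℝ) - G.dist (c n) z = L := by
    exact_mod_cast hL n hn
  refine ⟨L, rayLimit_of_forall_ge (M := N) ?_, rayLimit_of_forall_ge (M := t₀ + N) ?_⟩
  · rintro _ ⟨n, rfl⟩ hn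
    simpa using hLreal n (by exact_mod_cast hn)
  · intro t ht hMt
    have hx := hLreal _ (hgrowth N t ht hMt)
    rwa [hcA (γ' t) ⟨t, ⟨ht, by linarith [Nat.cast_nonneg (α := ℝ) N]⟩, rfl⟩] at hx
end

section
/- Let Γ = (V,E) be a connected graph with V countable and every vertex of finite degree, and d the path metric. Suppose there is a pair of vertices a, b ∈ V such that for every n ∈ ℕ there is a vertex c ∈ V with d(a,b) + d(b,c) + d(c,a) ≥ n and such that no minimal paths from a to c and from b to c share a tail, i.e. there is no vertex z ≠ c with d(a,z) + d(z,c) = d(a,c) and d(b,z) + d(z,c) = d(b,c). Then there exists a weakly-geodesic ray γ : T → V such that for every geodesic ray γ' : T' → V there exist y, z ∈ V with lim_{t→∞, t∈T} (d(γ(t),y) − d(γ(t),z)) ≠ lim_{t→∞, t∈T'} (d(γ'(t),y) − d(γ'(t),z)); that is, the metric boundary of (V,d) contains a point which is not a Busemann point. -/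
open Filter Topology

private lemma exists_adj_dist_le {V : Type*} {G : SimpleGraph V} (hconn : G.Connected)
    {a v : V} {R : ℕ} (hd : G.dist a v = R + 1) : ∃ w, G.Adj w v ∧ G.dist a w ≤ R := by
  obtain ⟨p, hp⟩ := (hconn a v).exists_walk_length_eq_dist
  have hne : v ≠ a := by rintro rfl; simp [SimpleGraph.dist_self] at hd
  obtain ⟨w, hadj, q, hq⟩ := SimpleGraph.Walk.exists_eq_cons_of_ne hne p.reverse
  refine ⟨w, hadj.symm, ?_⟩
  have hlen : q.length = R := by
    have h1 : p.reverse.length = R + 1 := by rw [SimpleGraph.Walk.length_reverse, hp, hd]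
    rw [hq] at h1; simpa using h1
  calc G.dist a w = G.dist w a := SimpleGraph.dist_comm
    _ ≤ q.length := SimpleGraph.dist_le q
    _ = R := hlen

private lemma ball_finite {V : Type*} {G : SimpleGraph V} (hconn : G.Connected)
    (hfin : ∀ v : V, (G.neighborSet v).Finite) (a : V) :
    ∀ R : ℕ, {v | G.dist a v ≤ R}.Finite := by
  intro R
  induction R with
  | zero =>
    refine Set.Finite.subset (Set.finite_singleton a) ?_
    intro v hv
    simp only [Set.mem_setOf_eq, Nat.le_zero] at hv
    exact ((hconn a v).dist_eq_zero_iff.mp hv).symm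
  | succ R ih =>
    refine Set.Finite.subset (ih.union (Set.Finite.biUnion ih (fun w _ => hfin w))) ?_
    intro v hv
    simp only [Set.mem_setOf_eq] at hv
    rcases Nat.lt_or_ge (G.dist a v) (R + 1) with hlt | hge
    · exact Or.inl (Nat.lt_succ_iff.mp hlt)
    · obtain ⟨w, hadj, hw⟩ := exists_adj_dist_le hconn (le_antisymm hv hge)
      exact Or.inr (Set.mem_biUnion hw hadj)

set_option maxHeartbeats 1000000 in
/-- Let `G` be a connected graph with countably many vertices all of finite
degree. If there are vertices `a`, `b` such that for every `n` there is a vertex `c`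
with perimeter `d(a,b) + d(b,c) + d(c,a) ≥ n` and no minimal paths from `a` and `b` to
`c` sharing a tail, then the metric boundary contains a point which is not a Busemann
point: there is a weakly-geodesic ray whose boundary limits differ from those of every
geodesic ray at some pair `y, z`. -/
theorem stmt4 {V : Type*} [Countable V] (G : SimpleGraph V) (hconn : G.Connected)
    (hfin : ∀ v : V, (G.neighborSet v).Finite)
    (hab : ∃ a b : V, ∀ n : ℕ, ∃ c : V,
      n ≤ G.dist a b + G.dist b c + G.dist c a ∧ ¬ ShareTail G.dist a b c) :
    ∃ T : Set ℝ, ∃ γ : ℝ → V, IsRayDomain T ∧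
      WeaklyGeodesicRay (fun x y => (G.dist x y : ℝ)) T γ ∧
      ∀ (T' : Set ℝ) (γ' : ℝ → V), IsRayDomain T' →
        GeodesicRay (fun x y => (G.dist x y : ℝ)) T' γ' →
        ∃ (y z : V) (L L' : ℝ),
          RayLimit (fun x y => (G.dist x y : ℝ)) T γ y z L ∧
          RayLimit (fun x y => (G.dist x y : ℝ)) T' γ' y z L' ∧ L ≠ L' := by
  classical
  obtain ⟨a, b, hab⟩ := hab
  choose c hcp hcst using hab
  -- distances to c n tend to infinity
  have hto : Tendsto (fun n => G.dist a (c n)) atTop atTop := by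
    rw [tendsto_atTop_atTop]
    intro R
    have hb : BddAbove ((fun v => G.dist a b + G.dist b v + G.dist v a) ''
        {v | G.dist a v ≤ R}) := ((ball_finite hconn hfin a R).image _).bddAbove
    obtain ⟨P, hP⟩ := hb
    refine ⟨P + 1, fun n hn => ?_⟩
    by_contra hcon
    push_neg at hcon
    have hmem : G.dist a b + G.dist b (c n) + G.dist (c n) a ≤ P :=
      hP ⟨c n, le_of_lt hcon, rfl⟩
    have := hcp n
    omega
  -- horofunction extraction by compactness
  set F : ℕ → (V → ℤ) := fun n x => (G.dist x (c n) : ℤ) - (G.dist a (c n) : ℤ) with hFdef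
  have hmemF : ∀ n, F n ∈ Set.pi Set.univ
      (fun x => Set.Icc (-(G.dist a x : ℤ)) ((G.dist a x : ℤ))) := by
    intro n x _
    have h1 : G.dist x (c n) ≤ G.dist x a + G.dist a (c n) := hconn.dist_triangle
    have h2 : G.dist a (c n) ≤ G.dist a x + G.dist x (c n) := hconn.dist_triangle
    have h3 : G.dist x a = G.dist a x := SimpleGraph.dist_comm
    constructor <;> simp only [hFdef] <;> omega
  have hcpt : IsCompact (Set.pi Set.univ
      (fun x : V => Set.Icc (-(G.dist a x : ℤ)) ((G.dist a x : ℤ)))) :=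
    isCompact_univ_pi (fun x => (Set.finite_Icc _ _).isCompact)
  obtain ⟨hlim, -, φ, hφ, hconv⟩ := hcpt.tendsto_subseq hmemF
  have heq : ∀ x : V, ∀ᶠ k in atTop, F (φ k) x = hlim x := by
    intro x
    have := tendsto_pi_nhds.1 hconv x
    simpa [nhds_discrete, tendsto_pure] using this
  -- extract strictly increasing distances
  have hDinf : Tendsto (fun k => G.dist a (c (φ k))) atTop atTop :=
    hto.comp hφ.tendsto_atTop
  have hstep : ∀ M K : ℕ, ∃ k, K ≤ k ∧ M < G.dist a (c (φ k)) := by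
    intro M K
    obtain ⟨K', hK'⟩ := tendsto_atTop_atTop.mp hDinf (M + 1)
    exact ⟨max K K', le_max_left _ _, by
      have := hK' (max K K') (le_max_right _ _); omega⟩
  set e : ℕ → ℕ := fun i => Nat.rec (hstep 0 0).choose
    (fun _ ei => (hstep (G.dist a (c (φ ei))) (ei + 1)).choose) i with hedef
  have he_succ : ∀ i, e (i + 1) = (hstep (G.dist a (c (φ (e i)))) (e i + 1)).choose :=
    fun i => rfl
  have heD : ∀ i, e i + 1 ≤ e (i + 1) ∧
      G.dist a (c (φ (e i))) < G.dist a (c (φ (e (i + 1)))):= by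
    intro i
    have h := (hstep (G.dist a (c (φ (e i)))) (e i + 1)).choose_spec
    rw [he_succ i]
    exact h
  set m : ℕ → ℕ := fun i => φ (e i) with hmdef
  set D : ℕ → ℕ := fun i => G.dist a (c (m i)) with hDdef
  have hDmono : StrictMono D := strictMono_nat_of_lt_succ (fun i => (heD i).2)
  have hemono : StrictMono e := strictMono_nat_of_lt_succ (fun i => (heD i).1)
  have hD0 : 1 ≤ D 0 := by
    have : e 0 = (hstep 0 0).choose := rfl
    have h2 := (hstep 0 0).choose_spec.2
    simp only [hDdef, hmdef, this]
    omega
  have hDge : ∀ i, 1 ≤ D i := fun i => le_trans hD0 (hDmono.monotone (Nat.zero_le i))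
  -- eventual equalities along m
  have hF : ∀ x : V, ∃ K : ℕ, ∀ i, K ≤ i → (G.dist x (c (m i)) : ℤ) = (D i : ℤ) + hlim x := by
    intro x
    obtain ⟨N, hN⟩ := eventually_atTop.mp (heq x)
    refine ⟨N, fun i hi => ?_⟩
    have hei : N ≤ e i := le_trans hi hemono.le_apply
    have := hN (e i) hei
    simp only [hFdef] at this
    simp only [hDdef, hmdef]
    omega
  have ha0 : hlim a = 0 := by
    obtain ⟨K, hK⟩ := hF a
    have := hK K le_rfl
    simp only [hDdef] at this
    omega
  -- the ray
  set T : Set ℝ := {0} ∪ Set.range (fun i => (D i : ℝ)) with hTdef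
  set γ : ℝ → V := fun t => if hk : ∃ i, ((D i : ℕ) : ℝ) = t then c (m hk.choose) else a
    with hγdef
  have hγD : ∀ i, γ ((D i : ℝ)) = c (m i) := by
    intro i
    have hk : ∃ j, ((D j : ℕ) : ℝ) = ((D i : ℕ) : ℝ) := ⟨i, rfl⟩
    have hch : hk.choose = i := by
      apply hDmono.injective
      exact_mod_cast hk.choose_spec
    simp only [hγdef, dif_pos hk, hch]
  have hγ0 : γ 0 = a := by
    have hnk : ¬ ∃ i, ((D i : ℕ) : ℝ) = (0 : ℝ) := by
      rintro ⟨i, hi⟩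
      have : D i = 0 := by exact_mod_cast hi
      have := hDge i
      omega
    simp only [hγdef, dif_neg hnk]
  have hTmem : ∀ t ∈ T, t ≠ 0 → ∃ i, ((D i : ℕ) : ℝ) = t := by
    intro t ht hne
    rcases ht with h | ⟨i, hi⟩
    · exact absurd h hne
    · exact ⟨i, hi⟩
  have hidx : ∀ (K : ℕ) (t : ℝ), t ∈ T → max 1 ((D K : ℕ) : ℝ) ≤ t →
      ∃ i, K ≤ i ∧ ((D i : ℕ) : ℝ) = t := by
    intro K t ht hNt
    have ht0 : t ≠ 0 := by
      have h1 : (1 : ℝ) ≤ t := le_trans (le_max_left _ _) hNt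
      linarith
    obtain ⟨i, hi⟩ := hTmem t ht ht0
    refine ⟨i, ?_, hi⟩
    by_contra hlt
    push_neg at hlt
    have h1 : D i < D K := hDmono hlt
    have h2 : ((D i : ℕ) : ℝ) < ((D K : ℕ) : ℝ) := by exact_mod_cast h1
    have h3 : ((D K : ℕ) : ℝ) ≤ t := le_trans (le_max_right _ _) hNt
    rw [hi] at h2
    linarith
  have hdval : ∀ (y : V) (K : ℕ), (∀ i, K ≤ i → (G.dist y (c (m i)) : ℤ)
      = (D i : ℤ) + hlim y) → ∀ i, K ≤ i →
      ((G.dist (c (m i)) y : ℕ) : ℝ) = (D i : ℝ) + ((hlim y : ℤ) : ℝ) := by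
    intro y K hK i hi
    have h1 := hK i hi
    have h2 : G.dist (c (m i)) y = G.dist y (c (m i)) := SimpleGraph.dist_comm
    rw [h2]
    exact_mod_cast h1
  refine ⟨T, γ, ⟨?_, ?_, ?_⟩, ?_, ?_⟩
  · -- T ⊆ Ici 0
    rintro t (h | ⟨i, hi⟩)
    · simp only [Set.mem_singleton_iff] at h
      simp [h]
    · simp only [Set.mem_Ici, ← hi]
      positivity
  · exact Or.inl rfl
  · -- unbounded
    intro M
    obtain ⟨n, hn⟩ := exists_nat_gt M
    refine ⟨(D n : ℝ), Or.inr ⟨n, rfl⟩, ?_⟩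
    have h1 : (n : ℝ) ≤ (D n : ℝ) := by exact_mod_cast hDmono.le_apply
    linarith
  · -- weakly geodesic
    intro y ε hε
    obtain ⟨K, hK⟩ := hF y
    refine ⟨max 1 ((D K : ℕ) : ℝ), ?_⟩
    intro s hs t ht hNs hNt
    obtain ⟨j, hjK, hj⟩ := hidx K s hs hNs
    obtain ⟨i, hiK, hi⟩ := hidx K t ht hNt
    rw [← hi, ← hj, hγD i, hγD j, hγ0]
    beta_reduce
    have hda : ((G.dist (c (m i)) a : ℕ) : ℝ) = (D i : ℝ) := by
      have : G.dist (c (m i)) a = D i := by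
        rw [SimpleGraph.dist_comm]
      exact_mod_cast this
    have hdi := hdval y K hK i hiK
    have hdj := hdval y K hK j hjK
    constructor
    · rw [hda]; simpa using hε
    · rw [hdi, hdj]; ring_nf; simpa using hε
  · -- main part
    have hRL : ∀ y z : V, RayLimit (fun x y => (G.dist x y : ℝ)) T γ y z
        (((hlim y - hlim z : ℤ) : ℝ)) := by
      intro y z
      obtain ⟨Ky, hKy⟩ := hF y
      obtain ⟨Kz, hKz⟩ := hF z
      set K := max Ky Kz with hKdef
      refine Tendsto.congr' ?_ tendsto_const_nhds
      rw [EventuallyEq, eventually_inf_principal]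
      filter_upwards [eventually_ge_atTop (max 1 ((D K : ℕ) : ℝ))] with t hNt htT
      obtain ⟨i, hiK, hi⟩ := hidx K t htT hNt
      rw [← hi, hγD i]
      beta_reduce
      have hdy := hdval y Ky hKy i (le_trans (le_max_left _ _) hiK)
      have hdz := hdval z Kz hKz i (le_trans (le_max_right _ _) hiK)
      rw [hdy, hdz]
      push_cast
      ring
    intro T' γ' hT' hgeo
    obtain ⟨hT'sub, hT'0, hT'unb⟩ := hT'
    have hnat : ∀ t ∈ T', ((G.dist (γ' t) (γ' 0) : ℕ) : ℝ) = t := by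
      intro t ht
      have h1 := hgeo t ht 0 hT'0
      beta_reduce at h1
      have h2 : (0 : ℝ) ≤ t := hT'sub ht
      rw [h1, sub_zero, abs_of_nonneg h2]
    set S : Set ℕ := {n | ((n : ℕ) : ℝ) ∈ T'} with hSdef
    set q : ℕ → V := fun n => γ' ((n : ℕ) : ℝ) with hqdef
    have hS0 : 0 ∈ S := by simp only [hSdef, Set.mem_setOf_eq, Nat.cast_zero]; exact hT'0
    have hSunb : ∀ N : ℕ, ∃ n ∈ S, N ≤ n := by
      intro N
      obtain ⟨t, htT, hlt⟩ := hT'unb (N : ℝ)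
      refine ⟨G.dist (γ' t) (γ' 0), ?_, ?_⟩
      · simp only [hSdef, Set.mem_setOf_eq, hnat t htT]; exact htT
      · have := hnat t htT
        have h2 : (N : ℝ) < ((G.dist (γ' t) (γ' 0) : ℕ) : ℝ) := by rw [this]; exact hlt
        exact_mod_cast h2.le
    have hqd : ∀ n ∈ S, ∀ n' ∈ S, n ≤ n' → (G.dist (q n) (q n') : ℤ) = (n' : ℤ) - n := by
      intro n hn n' hn' hle
      have h1 := hgeo ((n : ℕ) : ℝ) hn ((n' : ℕ) : ℝ) hn'
      have h2 : |((n : ℕ) : ℝ) - ((n' : ℕ) : ℝ)| = ((n' : ℕ) : ℝ) - ((n : ℕ) : ℝ) := by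
        rw [abs_sub_comm]
        apply abs_of_nonneg
        have : ((n : ℕ) : ℝ) ≤ ((n' : ℕ) : ℝ) := by exact_mod_cast hle
        linarith
      rw [h2] at h1
      beta_reduce at h1
      have h3 : ((G.dist (γ' ((n : ℕ) : ℝ)) (γ' ((n' : ℕ) : ℝ)) : ℕ) : ℝ) + (n : ℝ) = (n' : ℝ) := by
        linarith [h1]
      have h4 : G.dist (γ' ((n : ℕ) : ℝ)) (γ' ((n' : ℕ) : ℝ)) + n = n' := by exact_mod_cast h3
      simp only [hqdef]
      omega
    -- Busemann values of the geodesic ray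
    have hβex : ∀ y : V, ∃ (β : ℤ) (n₀ : ℕ), n₀ ∈ S ∧
        ∀ n ∈ S, n₀ ≤ n → (G.dist (q n) y : ℤ) - n = β := by
      intro y
      have hbdd : ∃ bd : ℤ, ∀ v : ℤ, (∃ n ∈ S, (G.dist (q n) y : ℤ) - n = v) → bd ≤ v := by
        refine ⟨-(G.dist (q 0) y : ℤ), ?_⟩
        rintro v ⟨n, hn, rfl⟩
        have h1 : (G.dist (q 0) (q n) : ℤ) = n := by
          have := hqd 0 hS0 n hn (Nat.zero_le n); omega
        have h2 : G.dist (q 0) (q n) ≤ G.dist (q 0) y + G.dist y (q n) := hconn.dist_triangle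
        have h3 : G.dist y (q n) = G.dist (q n) y := SimpleGraph.dist_comm
        omega
      have hinh : ∃ v : ℤ, ∃ n ∈ S, (G.dist (q n) y : ℤ) - n = v := ⟨_, 0, hS0, rfl⟩
      obtain ⟨β, ⟨n₀, hn₀S, hn₀v⟩, hleast⟩ := Int.exists_least_of_bdd hbdd hinh
      refine ⟨β, n₀, hn₀S, fun n hn hge => ?_⟩
      have hub : (G.dist (q n) y : ℤ) - n ≤ β := by
        have htri : G.dist (q n) y ≤ G.dist (q n) (q n₀) + G.dist (q n₀) y :=
          hconn.dist_triangle
        have hdq : (G.dist (q n) (q n₀) : ℤ) = (n : ℤ) - n₀ := by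
          have h5 := hqd n₀ hn₀S n hn hge
          have h6 : G.dist (q n) (q n₀) = G.dist (q n₀) (q n) := SimpleGraph.dist_comm
          omega
        omega
      exact le_antisymm hub (hleast _ ⟨n, hn, rfl⟩)
    choose β n₀ hn₀S hn₀ using hβex
    have hβq : ∀ n ∈ S, β (q n) = -(n : ℤ) := by
      intro n hn
      obtain ⟨n', hn'S, hn'ge⟩ := hSunb (max n (n₀ (q n)))
      have h1 := hn₀ (q n) n' hn'S (le_trans (le_max_right _ _) hn'ge)
      have h2 := hqd n hn n' hn'S (le_trans (le_max_left _ _) hn'ge)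
      have h3 : G.dist (q n') (q n) = G.dist (q n) (q n') := SimpleGraph.dist_comm
      omega
    by_cases hcase : ∀ y z : V, hlim y - hlim z = β y - β z
    · exfalso
      set C : ℤ := β a with hCdef
      have hβh : ∀ y : V, β y = hlim y + C := by
        intro y
        have := hcase y a
        omega
      obtain ⟨n, hnS, hnge⟩ := hSunb (max (n₀ a) (n₀ b))
      have hza : (G.dist (q n) a : ℤ) = (n : ℤ) + C := by
        have := hn₀ a n hnS (le_trans (le_max_left _ _) hnge)
        omega
      have hzb : (G.dist (q n) b : ℤ) = (n : ℤ) + hlim b + C := by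
        have h1 := hn₀ b n hnS (le_trans (le_max_right _ _) hnge)
        have h2 := hβh b
        omega
      have hhz : hlim (q n) = -(n : ℤ) - C := by
        have h1 := hβq n hnS
        have h2 := hβh (q n)
        omega
      obtain ⟨Kz, hKz⟩ := hF (q n)
      obtain ⟨Kb, hKb⟩ := hF b
      set i := max (max Kz Kb) (((n : ℤ) + C).toNat + 1) with hidef
      have hDi : ((n : ℤ) + C) < (D i : ℤ) := by
        have h1 : ((n : ℤ) + C).toNat + 1 ≤ i := le_max_right _ _
        have h2 : i ≤ D i := hDmono.le_apply
        have h3 := Int.self_le_toNat ((n : ℤ) + C)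
        have h4 : (((n : ℤ) + C).toNat : ℤ) + 1 ≤ (D i : ℤ) := by exact_mod_cast le_trans h1 h2
        omega
      have h1 : (G.dist (q n) (c (m i)) : ℤ) = (D i : ℤ) - n - C := by
        have := hKz i (le_trans (le_max_left _ _) (le_max_left _ _))
        rw [hhz] at this
        omega
      have hzne : q n ≠ c (m i) := by
        intro heq'
        rw [heq'] at h1
        rw [SimpleGraph.dist_self] at h1
        omega
      have hbc : (G.dist b (c (m i)) : ℤ) = (D i : ℤ) + hlim b :=
        hKb i (le_trans (le_max_right _ _) (le_max_left _ _))
      have hac : (G.dist a (c (m i)) : ℤ) = (D i : ℤ) := by simp only [hDdef]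
      refine hcst (m i) ⟨q n, hzne, ?_, ?_⟩
      · have haz : G.dist a (q n) = G.dist (q n) a := SimpleGraph.dist_comm
        have : (G.dist a (q n) : ℤ) + (G.dist (q n) (c (m i)) : ℤ)
            = (G.dist a (c (m i)) : ℤ) := by omega
        exact_mod_cast this
      · have hbz : G.dist b (q n) = G.dist (q n) b := SimpleGraph.dist_comm
        have : (G.dist b (q n) : ℤ) + (G.dist (q n) (c (m i)) : ℤ)
            = (G.dist b (c (m i)) : ℤ) := by omega
        exact_mod_cast this
    · push_neg at hcase
      obtain ⟨y, z, hyz⟩ := hcase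
      refine ⟨y, z, ((hlim y - hlim z : ℤ) : ℝ), ((β y - β z : ℤ) : ℝ), hRL y z, ?_, ?_⟩
      · refine Tendsto.congr' ?_ tendsto_const_nhds
        rw [EventuallyEq, eventually_inf_principal]
        filter_upwards [eventually_ge_atTop ((max (n₀ y) (n₀ z) : ℕ) : ℝ)] with t hNt htT
        have hn := hnat t htT
        set n : ℕ := G.dist (γ' t) (γ' 0) with hndef
        have hnS : n ∈ S := by
          simp only [hSdef, Set.mem_setOf_eq, hn]; exact htT
        have hnge : max (n₀ y) (n₀ z) ≤ n := by
          have : ((max (n₀ y) (n₀ z) : ℕ) : ℝ) ≤ ((n : ℕ) : ℝ) := by rw [hn]; exact hNt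
          exact_mod_cast this
        have hdy := hn₀ y n hnS (le_trans (le_max_left _ _) hnge)
        have hdz := hn₀ z n hnS (le_trans (le_max_right _ _) hnge)
        have hγt : γ' t = q n := by simp only [hqdef]; rw [← hn]
        rw [hγt]
        beta_reduce
        have hy' : ((G.dist (q n) y : ℕ) : ℝ) = ((β y : ℤ) : ℝ) + (n : ℝ) := by
          exact_mod_cast congrArg (Int.cast : ℤ → ℝ) (by omega : (G.dist (q n) y : ℤ) = β y + n)
        have hz' : ((G.dist (q n) z : ℕ) : ℝ) = ((β z : ℤ) : ℝ) + (n : ℝ) := by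
          exact_mod_cast congrArg (Int.cast : ℤ → ℝ) (by omega : (G.dist (q n) z : ℤ) = β z + n)
        rw [hy', hz']
        push_cast
        ring
      · intro hLL
        apply hyz
        exact_mod_cast hLL
end

section
/- Let Γ = (V,E) be a connected graph with V countable and every vertex of finite degree, and d the path metric. Suppose that for each pair of vertices a, b ∈ V there is a number M_{a,b} such that whenever c ∈ V is a vertex for which no minimal paths from a to c and from b to c share a tail (i.e. there is no z ≠ c with d(a,z) + d(z,c) = d(a,c) and d(b,z) + d(z,c) = d(b,c)), the perimeter d(a,b) + d(b,c) + d(c,a) is less than M_{a,b}. Then for every weakly-geodesic ray γ : T → V there exists a geodesic ray γ' : T' → V with lim_{t→∞, t∈T} (d(γ(t),y) − d(γ(t),z)) = lim_{t→∞, t∈T'} (d(γ'(t),y) − d(γ'(t),z)) for all y, z ∈ V; that is, every point of the metric boundary of (V,d) is a Busemann point. -/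
open Filter Topology

namespace Stmt5Aux
variable {V : Type*} {G : SimpleGraph V}

lemma dist_getVert_left (hconn : G.Connected) {u v : V} (p : G.Walk u v) :
    ∀ i : ℕ, G.dist u (p.getVert i) ≤ i := by
  induction p with
  | nil =>
    intro i
    rw [SimpleGraph.Walk.getVert_of_length_le _ (by simp : (SimpleGraph.Walk.nil : G.Walk _ _).length ≤ i)]
    simp [SimpleGraph.dist_self]
  | @cons u w v h q ih =>
    intro i
    cases i with
    | zero => simp [SimpleGraph.dist_self]
    | succ i =>
      rw [SimpleGraph.Walk.getVert_cons_succ]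
      calc G.dist u (q.getVert i) ≤ G.dist u w + G.dist w (q.getVert i) := hconn.dist_triangle
        _ ≤ 1 + i := add_le_add (SimpleGraph.dist_eq_one_iff_adj.mpr h).le (ih i)
        _ = i + 1 := by omega

lemma dist_getVert_right (hconn : G.Connected) {u v : V} (p : G.Walk u v) :
    ∀ i : ℕ, G.dist (p.getVert i) v ≤ p.length - i := by
  induction p with
  | nil =>
    intro i
    rw [SimpleGraph.Walk.getVert_of_length_le _ (by simp : (SimpleGraph.Walk.nil : G.Walk _ _).length ≤ i)]
    simp [SimpleGraph.dist_self]
  | @cons u w v h q ih =>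
    intro i
    cases i with
    | zero =>
      simpa using SimpleGraph.dist_le (SimpleGraph.Walk.cons h q)
    | succ i =>
      rw [SimpleGraph.Walk.getVert_cons_succ]
      simpa using ih i

/-- interpolation: point at prescribed distance on a geodesic. -/
lemma exists_interp (hconn : G.Connected) (u c : V) {i : ℕ} (hi : i ≤ G.dist u c) :
    ∃ z : V, G.dist u z = i ∧ G.dist u z + G.dist z c = G.dist u c := by
  obtain ⟨p, hp⟩ := hconn.exists_walk_length_eq_dist u c
  refine ⟨p.getVert i, ?_⟩
  have h1 := dist_getVert_left hconn p i
  have h2 := dist_getVert_right hconn p i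
  rw [hp] at h2
  have h3 := hconn.dist_triangle (u := u) (v := p.getVert i) (w := c)
  omega


lemma dist_getVert_succ (hconn : G.Connected) {u v : V} (p : G.Walk u v) (i : ℕ) :
    G.dist (p.getVert i) (p.getVert (i + 1)) ≤ 1 := by
  by_cases hi : i < p.length
  · exact le_of_eq (SimpleGraph.dist_eq_one_iff_adj.mpr (p.adj_getVert_succ hi))
  · push_neg at hi
    rw [p.getVert_of_length_le hi, p.getVert_of_length_le (by omega)]
    simp [SimpleGraph.dist_self]


/-- one-step witness of a shared tail -/
lemma share_tail_step (hconn : G.Connected) {a b c : V} (h : ShareTail G.dist a b c) :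
    ∃ z : V, G.dist z c = 1 ∧ G.dist a z + 1 = G.dist a c ∧ G.dist b z + 1 = G.dist b c := by
  obtain ⟨z', hne, ha, hb⟩ := h
  have hzc : 0 < G.dist z' c := hconn.pos_dist_of_ne hne
  obtain ⟨z, hz1, hz2⟩ := exists_interp hconn z' c (i := G.dist z' c - 1) (by omega)
  have hzc1 : G.dist z c = 1 := by omega
  have htri_a : G.dist a c ≤ G.dist a z + G.dist z c := hconn.dist_triangle
  have htri_a2 : G.dist a z ≤ G.dist a z' + G.dist z' z := hconn.dist_triangle
  have htri_b : G.dist b c ≤ G.dist b z + G.dist z c := hconn.dist_triangle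
  have htri_b2 : G.dist b z ≤ G.dist b z' + G.dist z' z := hconn.dist_triangle
  exact ⟨z, hzc1, by omega, by omega⟩

/-- descent to a prescribed distance-from-`c` level -/
lemma descent (hconn : G.Connected) {a b : V} {M : ℕ}
    (hMab : ∀ c : V, ¬ ShareTail G.dist a b c →
      G.dist a b + G.dist b c + G.dist c a < M) :
    ∀ (j : ℕ) (c : V), M + 2 * j ≤ G.dist a b + G.dist b c + G.dist c a →
      ∃ z : V, G.dist z c = j ∧ G.dist a z + G.dist z c = G.dist a c ∧
        G.dist b z + G.dist z c = G.dist b c := by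
  intro j
  induction j with
  | zero =>
    intro c _
    exact ⟨c, by simp [SimpleGraph.dist_self]⟩
  | succ j ih =>
    intro c hper
    obtain ⟨z, hz, haz, hbz⟩ := ih c (by omega)
    have hsh : ShareTail G.dist a b z := by
      by_contra hns
      have := hMab z hns
      have e1 : G.dist z a = G.dist a z := SimpleGraph.dist_comm ..
      have e2 : G.dist c a = G.dist a c := SimpleGraph.dist_comm ..
      omega
    obtain ⟨z₁, hz₁, haz₁, hbz₁⟩ := share_tail_step hconn hsh
    have htri : G.dist z₁ c ≤ G.dist z₁ z + G.dist z c := hconn.dist_triangle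
    have htri2 : G.dist a c ≤ G.dist a z₁ + G.dist z₁ c := hconn.dist_triangle
    have e1 : G.dist z₁ z = G.dist z z₁ := SimpleGraph.dist_comm ..
    exact ⟨z₁, by omega, by omega, by omega⟩

/-- balls are finite in a locally finite connected graph -/
lemma ball_finite (hconn : G.Connected) (hfin : ∀ v : V, (G.neighborSet v).Finite)
    (v : V) : ∀ r : ℕ, {w : V | G.dist v w ≤ r}.Finite := by
  intro r
  induction r with
  | zero =>
    refine Set.Finite.subset (Set.finite_singleton v) ?_
    intro w hw
    simp only [Set.mem_setOf_eq, Nat.le_zero] at hw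
    exact (hconn.dist_eq_zero_iff.mp (by rw [SimpleGraph.dist_comm]; exact hw)).symm ▸ rfl
  | succ r ih =>
    have : {w : V | G.dist v w ≤ r + 1} ⊆
        {w : V | G.dist v w ≤ r} ∪ ⋃ u ∈ {w : V | G.dist v w ≤ r}, (G.neighborSet u) := by
      intro w hw
      simp only [Set.mem_setOf_eq] at hw
      by_cases hle : G.dist v w ≤ r
      · exact Or.inl hle
      · have hd : G.dist v w = r + 1 := by omega
        obtain ⟨u, hu1, hu2⟩ := exists_interp hconn v w (i := r) (by omega)
        have huw : G.dist u w = 1 := by omega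
        refine Or.inr ?_
        simp only [Set.mem_iUnion, Set.mem_setOf_eq]
        exact ⟨u, hu1.le, SimpleGraph.dist_eq_one_iff_adj.mp huw⟩
    refine Set.Finite.subset (Set.Finite.union ih (Set.Finite.biUnion ih fun u _ => hfin u)) this

lemma L_neBot {T : Set ℝ} (hT : IsRayDomain T) : (atTop ⊓ 𝓟 T).NeBot := by
  rw [← frequently_mem_iff_neBot, frequently_atTop]
  intro a
  obtain ⟨t, ht, hat⟩ := hT.2.2 a
  exact ⟨t, hat.le, ht⟩

lemma exists_h {T : Set ℝ} {γ : ℝ → V} (hT : IsRayDomain T)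
    (hγ : WeaklyGeodesicRay (fun x y => (G.dist x y : ℝ)) T γ) :
    ∃ h : V → ℤ, ∀ y : V, ∀ᶠ t in atTop ⊓ 𝓟 T,
      (G.dist (γ t) y : ℤ) - (G.dist (γ t) (γ 0) : ℤ) = h y := by
  have key : ∀ y : V, ∃ H : ℤ, ∀ᶠ t in atTop ⊓ 𝓟 T,
      (G.dist (γ t) y : ℤ) - (G.dist (γ t) (γ 0) : ℤ) = H := by
    intro y
    obtain ⟨N, hN⟩ := hγ y (1/4) (by norm_num)
    obtain ⟨t₀, ht₀T, ht₀⟩ := hT.2.2 N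
    refine ⟨(G.dist (γ t₀) y : ℤ) - (G.dist (γ t₀) (γ 0) : ℤ), ?_⟩
    rw [eventually_inf_principal]
    filter_upwards [eventually_ge_atTop N] with t htN htT
    obtain ⟨h1, h2⟩ := hN t₀ ht₀T t htT ht₀.le htN
    obtain ⟨h3, -⟩ := hN t₀ ht₀T t₀ ht₀T ht₀.le ht₀.le
    have habs : |(((G.dist (γ t) y : ℤ) - (G.dist (γ t) (γ 0) : ℤ) -
        ((G.dist (γ t₀) y : ℤ) - (G.dist (γ t₀) (γ 0) : ℤ))) : ℝ)| < 1 := by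
      push_cast
      have heq : ((G.dist (γ t) y : ℝ) - (G.dist (γ t) (γ 0) : ℝ) -
          ((G.dist (γ t₀) y : ℝ) - (G.dist (γ t₀) (γ 0) : ℝ))) =
          ((G.dist (γ t) y : ℝ) - (G.dist (γ t₀) y : ℝ) - (t - t₀)) +
          (t - (G.dist (γ t) (γ 0) : ℝ)) + ((G.dist (γ t₀) (γ 0) : ℝ) - t₀) := by ring
      rw [heq]
      calc |_| ≤ |(G.dist (γ t) y : ℝ) - (G.dist (γ t₀) y : ℝ) - (t - t₀)| +
            |t - (G.dist (γ t) (γ 0) : ℝ)| + |(G.dist (γ t₀) (γ 0) : ℝ) - t₀| := by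
              exact (abs_add_le _ _).trans (by gcongr; exact abs_add_le _ _)
        _ < 1 := by
            rw [abs_sub_comm t]
            simp only at h1 h2 h3
            linarith
    have : |(G.dist (γ t) y : ℤ) - (G.dist (γ t) (γ 0) : ℤ) -
        ((G.dist (γ t₀) y : ℤ) - (G.dist (γ t₀) (γ 0) : ℤ))| < 1 := by exact_mod_cast habs
    have := Int.abs_lt_one_iff.mp this
    omega
  choose h hh using key
  exact ⟨h, hh⟩

lemma far {T : Set ℝ} {γ : ℝ → V} (hγ : WeaklyGeodesicRay (fun x y => (G.dist x y : ℝ)) T γ)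
    (R : ℕ) : ∀ᶠ t in atTop ⊓ 𝓟 T, R ≤ G.dist (γ t) (γ 0) := by
  obtain ⟨N, hN⟩ := hγ (γ 0) 1 one_pos
  rw [eventually_inf_principal]
  filter_upwards [eventually_ge_atTop (max N (R + 1 : ℕ))] with t ht htT
  have h1 := (hN t htT t htT (le_trans (le_max_left _ _) ht) (le_trans (le_max_left _ _) ht)).1
  simp only at h1
  have h2 : ((R : ℝ) + 1) ≤ t := by
    have : ((R + 1 : ℕ) : ℝ) ≤ t := le_trans (le_max_right _ _) ht
    push_cast at this
    linarith
  have : (R : ℝ) ≤ (G.dist (γ t) (γ 0) : ℝ) := by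
    have := abs_lt.mp h1
    linarith
  exact_mod_cast this


lemma anchor_step (hconn : G.Connected) (hfin : ∀ v : V, (G.neighborSet v).Finite)
    (hM : ∀ a b : V, ∃ M : ℕ, ∀ c : V, ¬ ShareTail G.dist a b c →
      G.dist a b + G.dist b c + G.dist c a < M)
    {T : Set ℝ} {γ : ℝ → V} (hT : IsRayDomain T)
    (hγ : WeaklyGeodesicRay (fun x y => (G.dist x y : ℝ)) T γ)
    {h : V → ℤ} (hh : ∀ y : V, ∀ᶠ t in atTop ⊓ 𝓟 T,
      (G.dist (γ t) y : ℤ) - (G.dist (γ t) (γ 0) : ℤ) = h y)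
    (a y : V) :
    ∃ w : V, 1 ≤ G.dist a w ∧ h a = h w + G.dist a w ∧ h y = h w + G.dist y w := by
  haveI := L_neBot hT
  obtain ⟨M, hMya⟩ := hM y a
  set k := M + 1 with hk
  -- eventual facts
  have E1 : ∀ᶠ t in atTop ⊓ 𝓟 T, ∀ w ∈ {w : V | G.dist a w ≤ k},
      (G.dist (γ t) w : ℤ) - (G.dist (γ t) (γ 0) : ℤ) = h w :=
    (eventually_all_finite (ball_finite hconn hfin a k)).2 fun w _ => hh w
  have E2 := hh y
  have E3 := hh a
  have E4 := far hγ (k + G.dist a (γ 0))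
  obtain ⟨t, h1, h2, h3, h4⟩ := (E1.and (E2.and (E3.and E4))).exists
  set c := γ t with hc
  -- basic distances
  have hac : k ≤ G.dist a c := by
    have := hconn.dist_triangle (u := c) (v := a) (w := γ 0)
    have e : G.dist c a = G.dist a c := SimpleGraph.dist_comm ..
    omega
  -- guard for descent
  have htri : G.dist a c ≤ G.dist a y + G.dist y c := hconn.dist_triangle
  have hguard : M + 2 * (G.dist a c - k) ≤ G.dist y a + G.dist a c + G.dist c y := by
    have e1 : G.dist y a = G.dist a y := SimpleGraph.dist_comm ..
    have e2 : G.dist c y = G.dist y c := SimpleGraph.dist_comm ..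
    omega
  obtain ⟨z, hz, hyz, haz⟩ := descent hconn hMya (G.dist a c - k) c hguard
  have hazk : G.dist a z = k := by omega
  have hzball : z ∈ {w : V | G.dist a w ≤ k} := by simp [hazk]
  have hz_h := h1 z hzball
  -- compute h a - h z and h y - h z
  have e1 : G.dist (γ t) a = G.dist a c := by rw [hc, SimpleGraph.dist_comm]
  have e2 : G.dist (γ t) y = G.dist y c := by rw [hc, SimpleGraph.dist_comm]
  have e3 : G.dist (γ t) z = G.dist z c := by rw [hc, SimpleGraph.dist_comm]
  have e4 : G.dist y z = G.dist z y := SimpleGraph.dist_comm ..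
  refine ⟨z, by omega, ?_, ?_⟩
  · rw [e1] at h3; rw [e3] at hz_h
    omega
  · rw [e2] at h2; rw [e3] at hz_h
    omega

end Stmt5Aux

open Stmt5Aux in
/-- Let `G` be a connected graph with countably many vertices all of finite
degree. If for each pair `a`, `b` there is a bound `M` such that every `c` for which no
minimal paths from `a` and `b` to `c` share a tail has perimeter `< M`, then every point
of the metric boundary is a Busemann point: every weakly-geodesic ray has the same
boundary limits as some geodesic ray. -/
theorem stmt5 {V : Type*} [Countable V] (G : SimpleGraph V) (hconn : G.Connected)
    (hfin : ∀ v : V, (G.neighborSet v).Finite)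
    (hM : ∀ a b : V, ∃ M : ℕ, ∀ c : V, ¬ ShareTail G.dist a b c →
      G.dist a b + G.dist b c + G.dist c a < M) :
    ∀ (T : Set ℝ) (γ : ℝ → V), IsRayDomain T →
      WeaklyGeodesicRay (fun x y => (G.dist x y : ℝ)) T γ →
      ∃ (T' : Set ℝ) (γ' : ℝ → V), IsRayDomain T' ∧
        GeodesicRay (fun x y => (G.dist x y : ℝ)) T' γ' ∧
        ∀ y z : V, ∃ L : ℝ,
          RayLimit (fun x y => (G.dist x y : ℝ)) T γ y z L ∧
          RayLimit (fun x y => (G.dist x y : ℝ)) T' γ' y z L := by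
  intro T γ hT hγ
  haveI := L_neBot hT
  haveI : Nonempty V := ⟨γ 0⟩
  obtain ⟨h, hh⟩ := exists_h hT hγ
  have h0 : h (γ 0) = 0 := by
    obtain ⟨t, ht⟩ := (hh (γ 0)).exists
    omega
  have hlip : ∀ u v : V, h u ≤ h v + G.dist v u := by
    intro u v
    obtain ⟨t, h1, h2⟩ := ((hh u).and (hh v)).exists
    have htri : G.dist (γ t) u ≤ G.dist (γ t) v + G.dist v u := hconn.dist_triangle
    omega
  have htrans : ∀ u v xx : V, h u = h v + G.dist u v → h v = h xx + G.dist v xx →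
      h u = h xx + G.dist u xx := by
    intro u v xx h1 h2
    have htri : G.dist u xx ≤ G.dist u v + G.dist v xx := hconn.dist_triangle
    have hl := hlip u xx
    have e : G.dist xx u = G.dist u xx := SimpleGraph.dist_comm ..
    omega
  obtain ⟨f, hf⟩ := exists_surjective_nat V
  choose F hF1 hF2 hF3 using anchor_step hconn hfin hM hT hγ hh
  -- the chain of anchors
  let w : ℕ → V := fun n => Nat.rec (γ 0) (fun n wn => F wn (f n)) n
  have hw0 : w 0 = γ 0 := rfl
  have hwsucc : ∀ n, w (n + 1) = F (w n) (f n) := fun n => rfl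
  have hBstep : ∀ n, h (w n) = h (w (n + 1)) + G.dist (w n) (w (n + 1)) := by
    intro n; rw [hwsucc]; exact hF2 (w n) (f n)
  have hBf : ∀ n, h (f n) = h (w (n + 1)) + G.dist (f n) (w (n + 1)) := by
    intro n; rw [hwsucc]; exact hF3 (w n) (f n)
  have hpos : ∀ n, 1 ≤ G.dist (w n) (w (n + 1)) := by
    intro n; rw [hwsucc]; exact hF1 (w n) (f n)
  have hB0 : ∀ n, h (γ 0) = h (w n) + G.dist (γ 0) (w n) := by
    intro n
    induction n with
    | zero => rw [hw0]; simp [SimpleGraph.dist_self]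
    | succ n ih => exact htrans _ _ _ ih (hBstep n)
  have hBfk : ∀ j k, j < k → h (f j) = h (w k) + G.dist (f j) (w k) := by
    intro j k hjk
    induction k with
    | zero => omega
    | succ k ih =>
      rcases Nat.lt_succ_iff_lt_or_eq.mp hjk with hlt | heq
      · exact htrans _ _ _ (ih hlt) (hBstep k)
      · subst heq; exact hBf j
  -- levels
  let nk : ℕ → ℕ := fun k => G.dist (γ 0) (w k)
  have hnkdef : ∀ k, nk k = G.dist (γ 0) (w k) := fun _ => rfl
  have hnk_h : ∀ k, h (w k) = -(nk k : ℤ) := by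
    intro k; have := hB0 k; rw [h0] at this; rw [hnkdef]; omega
  have hnk0 : nk 0 = 0 := by rw [hnkdef, hw0]; simp [SimpleGraph.dist_self]
  have hnksucc : ∀ k, nk (k + 1) = nk k + G.dist (w k) (w (k + 1)) := by
    intro k
    have h1 := hnk_h k; have h2 := hnk_h (k + 1); have h3 := hBstep k
    omega
  have hnmono : ∀ k, nk k + 1 ≤ nk (k + 1) := by
    intro k; have := hnksucc k; have := hpos k; omega
  have hnle : ∀ j k, j ≤ k → nk j ≤ nk k := by
    intro j k hjk
    induction k with
    | zero => have hj0 : j = 0 := Nat.le_zero.mp hjk; subst hj0; exact le_rfl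
    | succ k ih =>
      rcases eq_or_lt_of_le hjk with heq | hlt
      · subst heq; exact le_rfl
      · have := ih (by omega); have := hnmono k; omega
  have hnk_ge : ∀ k, k ≤ nk k := by
    intro k
    induction k with
    | zero => omega
    | succ k ih => have := hnmono k; omega
  -- geodesic segments
  choose W hWlen using fun k => hconn.exists_walk_length_eq_dist (w k) (w (k + 1))
  have hKex : ∀ n : ℕ, ∃ k, n < nk (k + 1) := fun n => ⟨n, by have := hnk_ge (n + 1); omega⟩
  let K : ℕ → ℕ := fun n => Nat.find (hKex n)
  have hK2 : ∀ n, n < nk (K n + 1) := fun n => Nat.find_spec (hKex n)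
  have hK1 : ∀ n, nk (K n) ≤ n := by
    intro n
    by_cases h0' : K n = 0
    · rw [h0', hnk0]; omega
    · have hlt : K n - 1 < K n := by omega
      have hmin := Nat.find_min (hKex n) hlt
      have he : K n - 1 + 1 = K n := by omega
      rw [he] at hmin
      omega
  let x : ℕ → V := fun n => (W (K n)).getVert (n - nk (K n))
  have hxdef : ∀ n, x n = (W (K n)).getVert (n - nk (K n)) := fun _ => rfl
  have hxspec : ∀ k n, nk k ≤ n → n ≤ nk (k + 1) → x n = (W k).getVert (n - nk k) := by
    intro k n hl hr
    rcases lt_or_eq_of_le hr with hlt | heq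
    · have hKn : K n = k := by
        have hle : K n ≤ k := Nat.find_min' (hKex n) hlt
        have hnlt : ¬ K n < k := by
          intro hc
          have hmono := hnle (K n + 1) k hc
          have := hK2 n
          omega
        omega
      rw [hxdef, hKn]
    · have hKn : K n = k + 1 := by
        have h1 : n < nk (k + 2) := by rw [heq]; exact hnmono (k + 1)
        have hle : K n ≤ k + 1 := Nat.find_min' (hKex n) h1
        have hnlt : ¬ K n < k + 1 := by
          intro hc
          have hmono := hnle (K n + 1) (k + 1) hc
          have := hK2 n
          omega
        omega
      have hx1 : x n = (W (k + 1)).getVert 0 := by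
        rw [hxdef, hKn]
        congr 1
        omega
      rw [hx1, SimpleGraph.Walk.getVert_zero]
      have hlen : n - nk k = (W k).length := by rw [hWlen]; have := hnksucc k; omega
      rw [hlen, SimpleGraph.Walk.getVert_length]
  have hxnk : ∀ k, x (nk k) = w k := by
    intro k
    rw [hxspec k (nk k) le_rfl (by have := hnmono k; omega)]
    simp [SimpleGraph.Walk.getVert_zero]
  have hxh : ∀ n, h (x n) = -(n : ℤ) := by
    intro n
    have hl := hK1 n; have hr := hK2 n
    have d1 : G.dist (w (K n)) (x n) ≤ n - nk (K n) := by
      rw [hxdef]; exact dist_getVert_left hconn _ _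
    have d2 : G.dist (x n) (w (K n + 1)) ≤ G.dist (w (K n)) (w (K n + 1)) - (n - nk (K n)) := by
      rw [hxdef, ← hWlen]; exact dist_getVert_right hconn _ _
    have hup := hlip (x n) (w (K n + 1))
    have hdown := hlip (w (K n)) (x n)
    have e1 : G.dist (w (K n + 1)) (x n) = G.dist (x n) (w (K n + 1)) := SimpleGraph.dist_comm ..
    have e2 : G.dist (x n) (w (K n)) = G.dist (w (K n)) (x n) := SimpleGraph.dist_comm ..
    have q1 := hnk_h (K n); have q2 := hnk_h (K n + 1); have q3 := hnksucc (K n)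
    omega
  have hstepd : ∀ n, G.dist (x n) (x (n + 1)) ≤ 1 := by
    intro n
    have hl := hK1 n; have hr := hK2 n
    have hx2 : x (n + 1) = (W (K n)).getVert (n + 1 - nk (K n)) :=
      hxspec (K n) (n + 1) (by omega) (by omega)
    have he : n + 1 - nk (K n) = (n - nk (K n)) + 1 := by omega
    rw [hxdef, hx2, he]
    exact dist_getVert_succ hconn _ _
  have hdeq : ∀ m n, m ≤ n → G.dist (x m) (x n) = n - m := by
    intro m n hmn
    have hle : G.dist (x m) (x n) ≤ n - m := by
      induction n, hmn using Nat.le_induction with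
      | base => simp [SimpleGraph.dist_self]
      | succ n hmn ih =>
        have htri : G.dist (x m) (x (n + 1)) ≤ G.dist (x m) (x n) + G.dist (x n) (x (n + 1)) :=
          hconn.dist_triangle
        have := hstepd n
        omega
    have h2 := hlip (x m) (x n)
    have e : G.dist (x n) (x m) = G.dist (x m) (x n) := SimpleGraph.dist_comm ..
    have := hxh m; have := hxh n
    omega
  -- eventual constancy of d(x n, y) - n
  have hconst : ∀ y : V, ∃ N : ℕ, ∀ n, N ≤ n → (G.dist (x n) y : ℤ) = h y + n := by
    intro y
    obtain ⟨j, hj⟩ := hf y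
    refine ⟨nk (j + 1), ?_⟩
    have hanti : ∀ m n, m ≤ n → (G.dist (x n) y : ℤ) - n ≤ (G.dist (x m) y : ℤ) - m := by
      intro m n hmn
      induction n, hmn using Nat.le_induction with
      | base => omega
      | succ n hmn ih =>
        have htri : G.dist (x (n + 1)) y ≤ G.dist (x (n + 1)) (x n) + G.dist (x n) y :=
          hconn.dist_triangle
        have hs := hstepd n
        have e : G.dist (x (n + 1)) (x n) = G.dist (x n) (x (n + 1)) := SimpleGraph.dist_comm ..
        omega
    have hanch : (G.dist (x (nk (j + 1))) y : ℤ) = h y + nk (j + 1) := by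
      rw [hxnk (j + 1)]
      have hb : h y = h (w (j + 1)) + G.dist y (w (j + 1)) := by
        rw [← hj]; exact hBfk j (j + 1) (Nat.lt_succ_self j)
      have e : G.dist (w (j + 1)) y = G.dist y (w (j + 1)) := SimpleGraph.dist_comm ..
      have := hnk_h (j + 1)
      omega
    intro n hn
    have h1 := hanti (nk (j + 1)) n hn
    have h2 := hlip y (x n)
    have := hxh n
    omega
  -- assemble
  refine ⟨Set.range (fun n : ℕ => (n : ℝ)), fun t => x ⌊t⌋₊, ⟨?_, ⟨0, by simp⟩, ?_⟩, ?_, ?_⟩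
  · rintro s ⟨n, rfl⟩
    exact Set.mem_Ici.mpr (Nat.cast_nonneg n)
  · intro M
    obtain ⟨n, hn⟩ := exists_nat_gt M
    exact ⟨n, ⟨n, rfl⟩, hn⟩
  · rintro s ⟨m, rfl⟩ t ⟨n, rfl⟩
    simp only [Nat.floor_natCast]
    rcases le_total m n with hmn | hnm
    · rw [hdeq m n hmn, Nat.cast_sub hmn, abs_sub_comm,
        abs_of_nonneg (sub_nonneg.mpr (by exact_mod_cast hmn))]
    · have e : G.dist (x m) (x n) = G.dist (x n) (x m) := SimpleGraph.dist_comm ..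
      rw [e, hdeq n m hnm, Nat.cast_sub hnm,
        abs_of_nonneg (sub_nonneg.mpr (by exact_mod_cast hnm))]
  · intro y z
    refine ⟨((h y - h z : ℤ) : ℝ), ?_, ?_⟩
    · refine Tendsto.congr' ?_ tendsto_const_nhds
      filter_upwards [(hh y).and (hh z)] with t ht
      obtain ⟨h1, h2⟩ := ht
      have : (G.dist (γ t) y : ℤ) - (G.dist (γ t) z : ℤ) = h y - h z := by omega
      show ((h y - h z : ℤ) : ℝ) = (G.dist (γ t) y : ℝ) - (G.dist (γ t) z : ℝ)
      exact_mod_cast this.symm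
    · obtain ⟨Ny, hNy⟩ := hconst y
      obtain ⟨Nz, hNz⟩ := hconst z
      refine Tendsto.congr' ?_ tendsto_const_nhds
      rw [EventuallyEq, eventually_inf_principal]
      filter_upwards [eventually_ge_atTop ((max Ny Nz : ℕ) : ℝ)] with t ht htT
      obtain ⟨n, rfl⟩ := htT
      simp only [Nat.floor_natCast]
      have ht' : ((Ny ⊔ Nz : ℕ) : ℝ) ≤ (n : ℝ) := ht
      have hn : max Ny Nz ≤ n := by exact_mod_cast ht'
      have h1 := hNy n (le_trans (le_max_left _ _) hn)
      have h2 := hNz n (le_trans (le_max_right _ _) hn)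
      have : (G.dist (x n) y : ℤ) - (G.dist (x n) z : ℤ) = h y - h z := by omega
      exact_mod_cast this.symm
end

section
/- Let Γ = (V,E) be a connected graph with path metric d, and suppose that for every n ∈ ℕ there is a number M_n such that every rigid triple {x,y,z} with d(x,y) = n has perimeter at most M_n. Then for any triple of vertices a, b, c with d(a,b) = n and d(a,c) + d(b,c) > n + max{M_k : k = 1,…,n}, there are minimal paths from a to c and from b to c which share a tail; i.e. there exists a vertex z ≠ c with d(a,z) + d(z,c) = d(a,c) and d(b,z) + d(z,c) = d(b,c). -/
open Filter Topology

/-- Suppose that in a connected graph every rigid triple `{x,y,z}` with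
`d(x,y) = n` has perimeter at most `M n`. Then any triple `a, b, c` with `d(a,b) = n`
and `d(a,c) + d(b,c) > n + max{M k : k = 1,…,n}` has minimal paths from `a` to `c` and
from `b` to `c` sharing a tail. -/
theorem stmt6 {V : Type*} (G : SimpleGraph V) (hconn : G.Connected)
    (M : ℕ → ℕ)
    (hM : ∀ x y z : V, RigidTriple G.dist x y z →
      G.dist x y + G.dist y z + G.dist z x ≤ M (G.dist x y)) :
    ∀ (a b c : V) (n : ℕ), G.dist a b = n →
      n + (Finset.Icc 1 n).sup M < G.dist a c + G.dist b c →
      ShareTail G.dist a b c := by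
  intro a b c n
  induction n using Nat.strong_induction_on generalizing a b c with
  | _ n ih =>
  intro hab hgt
  rcases Nat.eq_zero_or_pos n with hn0 | hn1
  · subst hn0
    simp only [Finset.Icc_eq_empty_of_lt (by norm_num : (0:ℕ) < 1), Finset.sup_empty,
      Nat.bot_eq_zero, Nat.zero_add] at hgt
    have hab0 : a = b := hconn.dist_eq_zero_iff.mp hab
    subst hab0
    have hac : 0 < G.dist a c := by omega
    have hne : a ≠ c := fun h => by simp [h, SimpleGraph.dist_self] at hac
    exact ⟨a, hne, by simp [SimpleGraph.dist_self], by simp [SimpleGraph.dist_self]⟩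
  -- n ≥ 1
  have hba : G.dist b a = n := by rw [SimpleGraph.dist_comm]; exact hab
  have hanb : a ≠ b := fun h => by simp [h, SimpleGraph.dist_self] at hab; omega
  have hbnc : b ≠ c := by
    rintro rfl
    simp [SimpleGraph.dist_self, hab] at hgt
  have hanc : a ≠ c := by
    rintro rfl
    simp [SimpleGraph.dist_self, hba] at hgt
  have hMn : M n ≤ (Finset.Icc 1 n).sup M :=
    Finset.le_sup (Finset.mem_Icc.mpr ⟨hn1, le_refl n⟩)
  by_cases hA : ¬ RigidApex G.dist a b c
  · unfold RigidApex at hA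
    push_neg at hA
    obtain ⟨w, hwa, h1, h2⟩ := hA
    -- d a w + d w b = d a b, d a w + d w c = d a c
    have hawpos : 0 < G.dist a w := hconn.pos_dist_of_ne (Ne.symm hwa)
    have hm : G.dist w b < n := by omega
    have hsup : (Finset.Icc 1 (G.dist w b)).sup M ≤ (Finset.Icc 1 n).sup M :=
      Finset.sup_mono (Finset.Icc_subset_Icc le_rfl (le_of_lt hm))
    obtain ⟨z, hzc, hz1, hz2⟩ := ih (G.dist w b) hm w b c rfl (by omega)
    refine ⟨z, hzc, ?_, hz2⟩
    have t1 : G.dist a z ≤ G.dist a w + G.dist w z := hconn.dist_triangle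
    have t2 : G.dist a c ≤ G.dist a z + G.dist z c := hconn.dist_triangle
    omega
  by_cases hB : ¬ RigidApex G.dist b a c
  · unfold RigidApex at hB
    push_neg at hB
    obtain ⟨w, hwb, h1, h2⟩ := hB
    -- d b w + d w a = d b a, d b w + d w c = d b c
    have hbwpos : 0 < G.dist b w := hconn.pos_dist_of_ne (Ne.symm hwb)
    have hwa' : G.dist a w = G.dist w a := SimpleGraph.dist_comm
    have hm : G.dist a w < n := by omega
    have hsup : (Finset.Icc 1 (G.dist a w)).sup M ≤ (Finset.Icc 1 n).sup M :=
      Finset.sup_mono (Finset.Icc_subset_Icc le_rfl (le_of_lt hm))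
    obtain ⟨z, hzc, hz1, hz2⟩ := ih (G.dist a w) hm a w c rfl (by omega)
    refine ⟨z, hzc, hz1, ?_⟩
    have t1 : G.dist b z ≤ G.dist b w + G.dist w z := hconn.dist_triangle
    have t2 : G.dist b c ≤ G.dist b z + G.dist z c := hconn.dist_triangle
    omega
  by_cases hC : ¬ RigidApex G.dist c a b
  · unfold RigidApex at hC
    push_neg at hC
    obtain ⟨w, hwc, h1, h2⟩ := hC
    -- d c w + d w a = d c a, d c w + d w b = d c b
    have e1 : G.dist c w = G.dist w c := SimpleGraph.dist_comm
    have e2 : G.dist c a = G.dist a c := SimpleGraph.dist_comm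
    have e3 : G.dist c b = G.dist b c := SimpleGraph.dist_comm
    have e4 : G.dist w a = G.dist a w := SimpleGraph.dist_comm
    have e5 : G.dist w b = G.dist b w := SimpleGraph.dist_comm
    exact ⟨w, hwc, by omega, by omega⟩
  · push_neg at hA hB hC
    have := hM a b c ⟨hanb, hbnc, hanc, hA, hB, hC⟩
    rw [hab] at this
    have eca : G.dist c a = G.dist a c := SimpleGraph.dist_comm
    omega
end

section
/- Let Γ = (V,E) be a connected graph with V countable and every vertex of finite degree, with path metric d. Suppose that for every n ∈ ℕ there is a number M_n such that every rigid triple {x,y,z} with d(x,y) = n has perimeter at most M_n. Then for every weakly-geodesic ray γ : T → V there exists a geodesic ray γ' : T' → V with lim_{t→∞, t∈T} (d(γ(t),y) − d(γ(t),z)) = lim_{t→∞, t∈T'} (d(γ'(t),y) − d(γ'(t),z)) for all y, z ∈ V; that is, every point of the metric boundary of (V,d) is a Busemann point. -/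
open Filter Topology

/-!
Call `z` *between* `x` and `y` when `d x z + d z y = d x y`. The bound on rigid triples gives a
radius `φ(n)` such that, if `d a b = n` and `c` is at distance at least `φ(n)` from `a` and `b`,
some `z ≠ c` is between `a` and `c` and between `b` and `c`: the triple `a, b, c` has too large a
perimeter to be rigid, and if it is not rigid at `a` (or `b`) one moves that vertex towards `c`
and inducts on `d a b`. Applied to the vertex `z` closest to `a` that is between `a` and `c` and
between `b` and `c`, this shows `d a z ≤ φ(n) + n`.

The points `γ t` of a weakly-geodesic ray eventually avoid every vertex. Given `w` and `y`, a
neighbour `u` of `w` towards `γ t`, and such a merging point `z` for `u`, `y` and `γ t`, range over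
finite sets, so one `z ≠ w` works for arbitrarily large `t`. Repeating this along an enumeration
of `V`, each time restricting the set of times, produces a geodesic sequence `w₀, w₁, …` in which
every `y` has some `w_J` between itself and all later `w_j`, and between itself and `γ t` for
arbitrarily large `t`. Hence `d(·, y) - d(·, z)` is eventually constant along the `w_j` and takes
the same value for arbitrarily large `t` along `γ`, which by weak geodesicity is its limit there.
-/

theorem IsRayDomain.neBot {T : Set ℝ} (hT : IsRayDomain T) : (atTop ⊓ 𝓟 T).NeBot :=
  frequently_mem_iff_neBot.1 <| frequently_atTop'.2 fun M =>
    let ⟨t, ht, hMt⟩ := hT.2.2 M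
    ⟨t, hMt, ht⟩

namespace WeaklyGeodesicRay

variable {X : Type*} {d : X → X → ℝ} {T : Set ℝ} {γ : ℝ → X}

theorem tendsto_dist_atTop (hγ : WeaklyGeodesicRay d T γ) :
    Tendsto (fun t => d (γ t) (γ 0)) (atTop ⊓ 𝓟 T) atTop := by
  obtain ⟨N, hN⟩ := hγ (γ 0) 1 one_pos
  refine tendsto_atTop_mono' _ ?_ ((tendsto_atTop_add_const_right _ (-1) tendsto_id).mono_left
    inf_le_left)
  rw [EventuallyLE, eventually_inf_principal]
  filter_upwards [eventually_ge_atTop N] with t ht htT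
  have := (hN t htT t htT ht ht).1
  rw [abs_lt] at this
  rw [id]
  linarith

theorem eventually_ne (hγ : WeaklyGeodesicRay d T γ) (x : X) : ∀ᶠ t in atTop ⊓ 𝓟 T, γ t ≠ x :=
  (hγ.tendsto_dist_atTop.eventually_gt_atTop (d x (γ 0))).mono fun _ ht h => (h ▸ ht).false

theorem rayLimit_of_frequently (hγ : WeaklyGeodesicRay d T γ) {y z : X} {L : ℝ}
    (h : ∃ᶠ t in atTop ⊓ 𝓟 T, d (γ t) y - d (γ t) z = L) : RayLimit d T γ y z L := by
  rw [RayLimit, Metric.tendsto_nhds]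
  intro ε hε
  obtain ⟨Ny, hNy⟩ := hγ y (ε / 2) (half_pos hε)
  obtain ⟨Nz, hNz⟩ := hγ z (ε / 2) (half_pos hε)
  have hev : ∀ᶠ t in atTop ⊓ 𝓟 T, t ∈ T ∧ max Ny Nz ≤ t :=
    (eventually_inf_principal.2 (.of_forall fun _ => id)).and
      ((eventually_ge_atTop _).filter_mono inf_le_left)
  obtain ⟨s, ⟨hsT, hs⟩, hsL⟩ := (hev.and_frequently h).exists
  filter_upwards [hev] with t ⟨htT, ht⟩
  have hy := (hNy s hsT t htT (le_of_max_le_left hs) (le_of_max_le_left ht)).2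
  have hz := (hNz s hsT t htT (le_of_max_le_right hs) (le_of_max_le_right ht)).2
  rw [abs_lt] at hy hz
  rw [Real.dist_eq, abs_lt]
  constructor <;> linarith

end WeaklyGeodesicRay

theorem exists_geodesicRay_of_seq {X : Type*} {d : X → X → ℝ} (w : ℕ → X) {n : ℕ → ℕ}
    (hn : StrictMono n) (hn₀ : n 0 = 0) (hd : ∀ i j, d (w i) (w j) = |(n i : ℝ) - n j|) :
    ∃ (T : Set ℝ) (γ : ℝ → X), IsRayDomain T ∧ GeodesicRay d T γ ∧
      ∀ P : X → Prop, (∀ᶠ m in atTop, P (w m)) → ∀ᶠ t in atTop ⊓ 𝓟 T, P (γ t) := by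
  set f : ℕ → ℝ := fun m => n m
  have hf : StrictMono f := fun i j h => Nat.cast_lt.2 (hn h)
  have hγ : ∀ m, w (Function.invFun f (f m)) = w m :=
    fun m => congrArg w (Function.leftInverse_invFun hf.injective m)
  refine ⟨Set.range f, w ∘ Function.invFun f, ⟨?_, ⟨0, by simp [f, hn₀]⟩, fun M => ?_⟩, ?_,
    fun P hP => ?_⟩
  · rintro _ ⟨m, rfl⟩
    exact Set.mem_Ici.2 (Nat.cast_nonneg _)
  · obtain ⟨m, hm⟩ :=
      (((tendsto_natCast_atTop_atTop (R := ℝ)).comp hn.tendsto_atTop).eventually_gt_atTop M).exists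
    exact ⟨_, ⟨m, rfl⟩, hm⟩
  · rintro _ ⟨i, rfl⟩ _ ⟨j, rfl⟩
    simpa only [Function.comp, hγ] using hd i j
  · obtain ⟨N, hN⟩ := eventually_atTop.1 hP
    rw [eventually_inf_principal]
    filter_upwards [eventually_ge_atTop (f N)] with t ht ⟨m, hm⟩
    subst hm
    simpa only [Function.comp, hγ] using hN m (hf.le_iff_le.1 ht)

def shareRadius (M : ℕ → ℕ) (n : ℕ) : ℕ := n + (Finset.range (n + 1)).sup M + 1

theorem lt_shareRadius (M : ℕ → ℕ) (n : ℕ) : M n < shareRadius M n := by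
  have := Finset.le_sup (f := M) (Finset.self_mem_range_succ n)
  unfold shareRadius
  omega

theorem shareRadius_add_le (M : ℕ → ℕ) (k m : ℕ) :
    shareRadius M k + m ≤ shareRadius M (k + m) := by
  have := Finset.sup_mono (f := M) (Finset.range_subset_range.2 (by omega : k + 1 ≤ k + m + 1))
  unfold shareRadius
  omega

namespace SimpleGraph

variable {V : Type*}

def Between (G : SimpleGraph V) (x y z : V) : Prop :=
  G.dist x y + G.dist y z = G.dist x z

def RigidPerimeterBound (G : SimpleGraph V) (M : ℕ → ℕ) : Prop :=
  ∀ x y z : V, RigidTriple G.dist x y z → G.dist x y + G.dist y z + G.dist z x ≤ M (G.dist x y)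

variable {G : SimpleGraph V} {a b c u v w x y z : V}

theorem between_self_left : G.Between a a c := by
  simp [Between]

theorem between_self_right : G.Between a c c := by
  simp [Between]

theorem Between.symm (h : G.Between x y z) : G.Between z y x := by
  unfold Between at *
  rw [dist_comm (u := z) (v := y), dist_comm (u := y) (v := x), dist_comm (u := z) (v := x)]
  omega

theorem Between.trans_right (hG : G.Connected) (h₁ : G.Between w x z) (h₂ : G.Between x y z) :
    G.Between w y z := by
  have := hG.dist_triangle (u := w) (v := x) (w := y)
  have := hG.dist_triangle (u := w) (v := y) (w := z)
  unfold Between at *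
  omega

theorem Between.trans_left (hG : G.Connected) (h₁ : G.Between w y z) (h₂ : G.Between w x y) :
    G.Between w x z :=
  (h₁.symm.trans_right hG h₂.symm).symm

theorem Between.trans_right_left (hG : G.Connected) (h₁ : G.Between w x z)
    (h₂ : G.Between x y z) : G.Between w x y := by
  have := hG.dist_triangle (u := w) (v := x) (w := y)
  have := hG.dist_triangle (u := w) (v := y) (w := z)
  unfold Between at *
  omega

theorem Between.dist_sub_dist_eq (hy : G.Between y c a) (hz : G.Between z c a) :
    (G.dist a y : ℝ) - G.dist a z = G.dist c y - G.dist c z := by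
  have hy' : (G.dist y c : ℝ) + G.dist c a = G.dist y a := by exact_mod_cast hy
  have hz' : (G.dist z c : ℝ) + G.dist c a = G.dist z a := by exact_mod_cast hz
  rw [dist_comm (u := a), dist_comm (u := a), dist_comm (u := c), dist_comm (u := c)]
  linarith

theorem exists_adj_between (hG : G.Connected) (h : v ≠ c) : ∃ u, G.Adj v u ∧ G.Between v u c := by
  obtain ⟨p, hp⟩ := hG.exists_walk_length_eq_dist v c
  cases p with
  | nil => exact absurd rfl h
  | @cons _ u _ hadj q =>
    refine ⟨u, hadj, ?_⟩
    have := dist_le q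
    have := hG.dist_triangle (u := v) (v := u) (w := c)
    rw [Walk.length_cons] at hp
    unfold Between
    rw [dist_eq_one_iff_adj.2 hadj] at *
    omega

theorem finite_setOf_dist_le (hG : G.Connected) (hfin : ∀ v, (G.neighborSet v).Finite) (v : V) :
    ∀ R : ℕ, {x | G.dist v x ≤ R}.Finite
  | 0 => (Set.finite_singleton v).subset fun x hx => (hG.dist_eq_zero_iff.1 (Nat.le_zero.1 hx)).symm
  | R + 1 => by
    refine ((finite_setOf_dist_le hG hfin v R).biUnion fun u _ => (hfin u).insert u).subset
      fun x hx => ?_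
    by_cases hxv : x = v
    · subst hxv
      exact Set.mem_biUnion (x := x) (by simp) (Set.mem_insert x _)
    obtain ⟨u, hxu, hu⟩ := exists_adj_between hG hxv
    have hvu : G.dist v u ≤ R := by
      have := dist_eq_one_iff_adj.2 hxu
      unfold Between at hu
      change G.dist v x ≤ R + 1 at hx
      rw [dist_comm] at hx
      rw [dist_comm]
      omega
    exact Set.mem_biUnion hvu (Set.mem_insert_of_mem u hxu.symm)

variable {M : ℕ → ℕ}

theorem shareTail_of_not_rigidApex (hG : G.Connected) (hA : ¬RigidApex G.dist a b c)
    (hac : shareRadius M (G.dist a b) ≤ G.dist a c) (hbc : shareRadius M (G.dist a b) ≤ G.dist b c)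
    (ih : ∀ x, G.dist x b < G.dist a b → shareRadius M (G.dist x b) ≤ G.dist x c →
      shareRadius M (G.dist x b) ≤ G.dist b c → ShareTail G.dist x b c) :
    ShareTail G.dist a b c := by
  simp only [RigidApex, not_forall, not_not] at hA
  obtain ⟨x, hxa, hxb, hxc⟩ := hA
  have hax := hG.pos_dist_of_ne (Ne.symm hxa)
  have hφ : shareRadius M (G.dist x b) + G.dist a x ≤ shareRadius M (G.dist a b) := by
    rw [← hxb, add_comm (G.dist a x)]
    exact shareRadius_add_le M _ _
  obtain ⟨z, hzc, hxz, hbz⟩ := ih x (by omega) (by omega) (by omega)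
  exact ⟨z, hzc, (show G.Between a x c from hxc).trans_right hG hxz, hbz⟩

theorem shareTail_of_shareRadius_le (hG : G.Connected) (hM : G.RigidPerimeterBound M)
    (hac : shareRadius M (G.dist a b) ≤ G.dist a c)
    (hbc : shareRadius M (G.dist a b) ≤ G.dist b c) : ShareTail G.dist a b c := by
  induction hn : G.dist a b using Nat.strong_induction_on generalizing a b with
  | _ n ih =>
  subst hn
  have hlt := lt_shareRadius M (G.dist a b)
  have hac' : a ≠ c := by
    rintro rfl
    simp only [dist_self] at hac
    omega
  have hbc' : b ≠ c := by
    rintro rfl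
    simp only [dist_self] at hbc
    omega
  by_cases hab : a = b
  · subst hab
    exact ⟨a, hac', between_self_left, between_self_left⟩
  by_cases hA : RigidApex G.dist a b c
  swap
  · exact shareTail_of_not_rigidApex hG hA hac hbc fun x hx h₁ h₂ => ih _ hx h₁ h₂ rfl
  by_cases hB : RigidApex G.dist b a c
  swap
  · rw [dist_comm] at hac hbc
    obtain ⟨z, hzc, hbz, haz⟩ := shareTail_of_not_rigidApex hG hB hbc hac fun x hx h₁ h₂ =>
      ih _ (by rwa [dist_comm (u := b)] at hx) h₁ h₂ rfl
    exact ⟨z, hzc, haz, hbz⟩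
  by_cases hC : RigidApex G.dist c a b
  · have := hM a b c ⟨hab, hbc', hac', hA, hB, hC⟩
    rw [dist_comm (u := c)] at this
    omega
  simp only [RigidApex, not_forall, not_not] at hC
  obtain ⟨x, hxc, hca, hcb⟩ := hC
  exact ⟨x, hxc, Between.symm hca, Between.symm hcb⟩

theorem exists_between_between_dist_le (hG : G.Connected) (hM : G.RigidPerimeterBound M)
    (a b c : V) : ∃ z, G.Between a z c ∧ G.Between b z c ∧
      G.dist a z ≤ shareRadius M (G.dist a b) + G.dist a b := by
  classical
  have hex : ∃ k z, G.Between a z c ∧ G.Between b z c ∧ G.dist a z = k :=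
    ⟨_, c, between_self_right, between_self_right, rfl⟩
  obtain ⟨z, haz, hbz, hz⟩ := Nat.find_spec hex
  refine ⟨z, haz, hbz, not_lt.1 fun hlt => ?_⟩
  have := hG.dist_triangle (u := a) (v := b) (w := z)
  obtain ⟨z', hz'z, haz', hbz'⟩ := shareTail_of_shareRadius_le hG hM (a := a) (b := b) (c := z)
    (by omega) (by omega)
  have hmin := Nat.find_min' hex ⟨z', haz.trans_left hG haz', hbz.trans_left hG hbz', rfl⟩
  have := hG.pos_dist_of_ne hz'z
  omega

section Escaping

variable {ι : Type*} {p : ι → V}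

theorem between_of_eventually (hG : G.Connected) {l : Filter ι} [l.NeBot]
    (h₁ : ∀ᶠ t in l, G.Between a b (p t)) (h₂ : ∀ᶠ t in l, G.Between b c (p t)) :
    G.Between a b c :=
  let ⟨_, ht₁, ht₂⟩ := (h₁.and h₂).exists
  ht₁.trans_right_left hG ht₂

theorem exists_ne_frequently_between (hG : G.Connected) (hfin : ∀ v, (G.neighborSet v).Finite)
    (hM : G.RigidPerimeterBound M) {l : Filter ι} [l.NeBot] (hp : ∀ v, ∀ᶠ t in l, p t ≠ v)
    (w y : V) : ∃ w', w ≠ w' ∧ ∃ᶠ t in l, G.Between w w' (p t) ∧ G.Between y w' (p t) := by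
  obtain ⟨u, hwu, hu⟩ : ∃ u ∈ G.neighborSet w, ∃ᶠ t in l, G.Between w u (p t) :=
    (hfin w).frequently_exists.1 <| (hp w).frequently.mono
      fun t ht => exists_adj_between hG (Ne.symm ht)
  obtain ⟨z, -, hz⟩ : ∃ z ∈ {x | G.dist u x ≤ shareRadius M (G.dist u y) + G.dist u y},
      ∃ᶠ t in l, G.Between w u (p t) ∧ G.Between u z (p t) ∧ G.Between y z (p t) :=
    (finite_setOf_dist_le hG hfin u _).frequently_exists.1 <| hu.mono fun t hwut => by
      obtain ⟨z, huz, hyz, hz⟩ := exists_between_between_dist_le hG hM u y (p t)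
      exact ⟨z, hz, hwut, huz, hyz⟩
  refine ⟨z, ?_, hz.mono fun t ⟨h₁, h₂, h₃⟩ => ⟨h₁.trans_right hG h₂, h₃⟩⟩
  rintro rfl
  obtain ⟨t, hwut, huwt, -⟩ := hz.exists
  have := dist_eq_one_iff_adj.2 hwu
  unfold Between at hwut huwt
  rw [dist_comm (u := u)] at huwt
  omega

theorem exists_seq_filters_between (hG : G.Connected) (hfin : ∀ v, (G.neighborSet v).Finite)
    (hM : G.RigidPerimeterBound M) [Nonempty V] {l₀ : Filter ι} [l₀.NeBot]
    (hp : ∀ v, ∀ᶠ t in l₀, p t ≠ v) (e : ℕ → V) :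
    ∃ (w : ℕ → V) (l : ℕ → Filter ι), Antitone l ∧ (∀ m, l m ≤ l₀) ∧ (∀ m, (l m).NeBot) ∧
      ∀ m, w m ≠ w (m + 1) ∧
        ∀ᶠ t in l (m + 1),
          G.Between (w m) (w (m + 1)) (p t) ∧ G.Between (e m) (w (m + 1)) (p t) := by
  have hstep : ∀ (m : ℕ) (s : V × Filter ι), ∃ w' : V, s.2 ≤ l₀ → s.2.NeBot →
      s.1 ≠ w' ∧ ∃ᶠ t in s.2, G.Between s.1 w' (p t) ∧ G.Between (e m) w' (p t) := by
    rintro m ⟨w, l⟩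
    by_cases hl : l ≤ l₀ ∧ l.NeBot
    · have := hl.2
      obtain ⟨w', hw'⟩ := exists_ne_frequently_between hG hfin hM
        (fun v => (hp v).filter_mono hl.1) w (e m)
      exact ⟨w', fun _ _ => hw'⟩
    · exact ⟨w, fun h₁ h₂ => absurd ⟨h₁, h₂⟩ hl⟩
  choose next hnext using hstep
  let s : ℕ → V × Filter ι := fun m => m.rec (Classical.arbitrary V, l₀) fun m s =>
    (next m s, s.2 ⊓ 𝓟 {t | G.Between s.1 (next m s) (p t) ∧ G.Between (e m) (next m s) (p t)})
  have hs : ∀ m, (s m).2 ≤ l₀ ∧ (s m).2.NeBot := by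
    intro m
    induction m with
    | zero => exact ⟨le_rfl, ‹_›⟩
    | succ m ih =>
      exact ⟨inf_le_left.trans ih.1, frequently_iff_neBot.1 (hnext m (s m) ih.1 ih.2).2⟩
  exact ⟨fun m => (s m).1, fun m => (s m).2, antitone_nat_of_succ_le fun m => inf_le_left,
    fun m => (hs m).1, fun m => (hs m).2,
    fun m => ⟨(hnext m (s m) (hs m).1 (hs m).2).1, mem_inf_of_right (mem_principal_self _)⟩⟩

theorem eventually_between_of_le (hG : G.Connected) {w : ℕ → V} {l : ℕ → Filter ι}
    (hl : Antitone l) (hw : ∀ m, ∀ᶠ t in l (m + 1), G.Between (w m) (w (m + 1)) (p t))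
    {i j : ℕ} (hy : ∀ᶠ t in l i, G.Between y (w i) (p t)) (hij : i ≤ j) :
    ∀ᶠ t in l j, G.Between y (w j) (p t) := by
  induction j, hij using Nat.le_induction with
  | base => exact hy
  | succ j _ ih =>
    filter_upwards [ih.filter_mono (hl j.le_succ), hw j] with t h₁ h₂ using h₁.trans_right hG h₂

theorem exists_seq_between_eventually_dist_sub_eq [Countable V] [Nonempty V]
    (hG : G.Connected) (hfin : ∀ v, (G.neighborSet v).Finite) (hM : G.RigidPerimeterBound M)
    {l₀ : Filter ι} [l₀.NeBot] (hp : ∀ v, ∀ᶠ t in l₀, p t ≠ v) :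
    ∃ w : ℕ → V, (∀ m, w m ≠ w (m + 1)) ∧ (∀ i j, i ≤ j → G.Between (w 0) (w i) (w j)) ∧
      ∀ y z, ∃ L : ℝ, (∀ᶠ m in atTop, (G.dist (w m) y : ℝ) - G.dist (w m) z = L) ∧
        ∃ᶠ t in l₀, (G.dist (p t) y : ℝ) - G.dist (p t) z = L := by
  obtain ⟨e, he⟩ := exists_surjective_nat V
  obtain ⟨w, l, hl, hl₀, hne, hw⟩ := exists_seq_filters_between hG hfin hM hp e
  have hsucc m := (hw m).2.mono fun _ h => h.1
  have hchain i j (hij : i ≤ j) : ∀ᶠ t in l j, G.Between (w i) (w j) (p t) :=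
    eventually_between_of_le hG hl hsucc (.of_forall fun _ => between_self_left) hij
  have hgate y : ∃ J, ∀ j, J ≤ j → ∀ᶠ t in l j, G.Between y (w j) (p t) := by
    obtain ⟨m, rfl⟩ := he y
    exact ⟨m + 1, fun j => eventually_between_of_le hG hl hsucc ((hw m).2.mono fun _ h => h.2)⟩
  refine ⟨w, fun m => (hw m).1, fun i j hij =>
    between_of_eventually hG ((hchain 0 i i.zero_le).filter_mono (hl hij)) (hchain i j hij),
    fun y z => ?_⟩
  obtain ⟨Jy, hJy⟩ := hgate y
  obtain ⟨Jz, hJz⟩ := hgate z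
  have hy := hJy _ (le_max_left Jy Jz)
  have hz := hJz _ (le_max_right Jy Jz)
  refine ⟨_, ?_, ((hy.and hz).frequently.filter_mono (hl₀ _)).mono fun t ⟨hyt, hzt⟩ =>
    hyt.dist_sub_dist_eq hzt⟩
  filter_upwards [eventually_ge_atTop (max Jy Jz)] with j hj
  exact (between_of_eventually hG (hy.filter_mono (hl hj)) (hchain _ j hj)).dist_sub_dist_eq
    (between_of_eventually hG (hz.filter_mono (hl hj)) (hchain _ j hj))

end Escaping

theorem exists_geodesicRay_of_between (hG : G.Connected) {w : ℕ → V} (hw : ∀ m, w m ≠ w (m + 1))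
    (hgeo : ∀ i j, i ≤ j → G.Between (w 0) (w i) (w j)) :
    ∃ (T : Set ℝ) (γ : ℝ → V), IsRayDomain T ∧ GeodesicRay (fun x y => (G.dist x y : ℝ)) T γ ∧
      ∀ P : V → Prop, (∀ᶠ m in atTop, P (w m)) → ∀ᶠ t in atTop ⊓ 𝓟 T, P (γ t) := by
  refine exists_geodesicRay_of_seq w (n := fun m => G.dist (w 0) (w m))
    (strictMono_nat_of_lt_succ fun m => ?_) dist_self fun i j => ?_
  · have := hgeo m (m + 1) m.le_succ
    have := hG.pos_dist_of_ne (hw m)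
    unfold Between at *
    omega
  · wlog hij : i ≤ j generalizing i j
    · rw [dist_comm, abs_sub_comm]
      exact this j i (le_of_not_ge hij)
    have h : (G.dist (w 0) (w i) : ℝ) + G.dist (w i) (w j) = G.dist (w 0) (w j) := by
      exact_mod_cast hgeo i j hij
    rw [abs_sub_comm, abs_of_nonneg (by linarith [(G.dist (w i) (w j)).cast_nonneg (α := ℝ)])]
    linarith

end SimpleGraph

open SimpleGraph in
/-- Let `G` be a connected graph with countably many vertices all of finite
degree, such that every rigid triple `{x,y,z}` with `d(x,y) = n` has perimeter at most
`M n`. Then every point of the metric boundary is a Busemann point: every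
weakly-geodesic ray has the same boundary limits as some geodesic ray. -/
theorem stmt7 {V : Type*} [Countable V] (G : SimpleGraph V) (hconn : G.Connected)
    (hfin : ∀ v : V, (G.neighborSet v).Finite)
    (M : ℕ → ℕ)
    (hM : ∀ x y z : V, RigidTriple G.dist x y z →
      G.dist x y + G.dist y z + G.dist z x ≤ M (G.dist x y)) :
    ∀ (T : Set ℝ) (γ : ℝ → V), IsRayDomain T →
      WeaklyGeodesicRay (fun x y => (G.dist x y : ℝ)) T γ →
      ∃ (T' : Set ℝ) (γ' : ℝ → V), IsRayDomain T' ∧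
        GeodesicRay (fun x y => (G.dist x y : ℝ)) T' γ' ∧
        ∀ y z : V, ∃ L : ℝ,
          RayLimit (fun x y => (G.dist x y : ℝ)) T γ y z L ∧
          RayLimit (fun x y => (G.dist x y : ℝ)) T' γ' y z L := by
  intro T γ hT hγ
  have := hT.neBot
  have : Nonempty V := ⟨γ 0⟩
  obtain ⟨w, hw, hgeo, hlim⟩ :=
    exists_seq_between_eventually_dist_sub_eq hconn hfin hM hγ.eventually_ne
  obtain ⟨T', γ', hT', hγ', htail⟩ := exists_geodesicRay_of_between hconn hw hgeo
  refine ⟨T', γ', hT', hγ', fun y z => ?_⟩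
  obtain ⟨L, hwL, hγL⟩ := hlim y z
  exact ⟨L, hγ.rayLimit_of_frequently hγL,
    tendsto_const_nhds.congr' ((htail (fun v => (G.dist v y : ℝ) - G.dist v z = L) hwL).mono
      fun _ h => h.symm)⟩
end

section
/- Let G be a finitely generated group with finite symmetric generating set S = S⁻¹ (1 ∉ S) and word metric d. Suppose there is some n ∈ ℕ such that for every m ∈ ℕ there is a rigid triple {x,y,z} in (G,d) with d(x,y) = n and perimeter greater than m. Then there exists a weakly-geodesic ray γ : T → G such that for every geodesic ray γ' : T' → G there exist y, z ∈ G with lim_{t→∞, t∈T} (d(γ(t),y) − d(γ(t),z)) ≠ lim_{t→∞, t∈T'} (d(γ'(t),y) − d(γ'(t),z)); that is, the metric boundary of the Cayley graph of (G,S) contains a point which is not a Busemann point. -/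
open Filter Topology

/-- The word metric on a group `G` with respect to a generating set `S`:
`wordDist S g h` is the least `n` such that `g⁻¹ * h` is a product of `n` elements of `S`. -/
noncomputable def wordDist {G : Type*} [Group G] (S : Set G) (g h : G) : ℕ :=
  sInf {n | ∃ l : List G, l.length = n ∧ (∀ x ∈ l, x ∈ S) ∧ l.prod = g⁻¹ * h}


namespace WD
variable {G : Type*} [Group G] {S : Set G}

variable {G : Type*} [Group G] {S : Set G}

lemma exists_list (hSsym : ∀ s ∈ S, s⁻¹ ∈ S) (hgen : Subgroup.closure S = ⊤) (g : G) :
    ∃ l : List G, (∀ x ∈ l, x ∈ S) ∧ l.prod = g := by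
  have hg : g ∈ Subgroup.closure S := by rw [hgen]; trivial
  induction hg using Subgroup.closure_induction with
  | mem x hx => exact ⟨[x], by simpa using hx, by simp⟩
  | one => exact ⟨[], by simp, by simp⟩
  | mul x y hx hy ihx ihy =>
      obtain ⟨l1, h1, p1⟩ := ihx
      obtain ⟨l2, h2, p2⟩ := ihy
      refine ⟨l1 ++ l2, ?_, by simp [List.prod_append, p1, p2]⟩
      intro a ha
      rcases List.mem_append.mp ha with h | h
      exacts [h1 a h, h2 a h]
  | inv x hx ihx =>
      obtain ⟨l, h1, p1⟩ := ihx
      refine ⟨(l.map (fun a => a⁻¹)).reverse, ?_, ?_⟩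
      · intro a ha
        simp only [List.mem_reverse, List.mem_map] at ha
        obtain ⟨b, hb, rfl⟩ := ha
        exact hSsym b (h1 b hb)
      · rw [← List.prod_inv_reverse, p1]

lemma le_length (g h : G) (l : List G) (hl : ∀ x ∈ l, x ∈ S) (hp : l.prod = g⁻¹ * h) :
    wordDist S g h ≤ l.length := Nat.sInf_le ⟨l, rfl, hl, hp⟩

lemma min_list (hSsym : ∀ s ∈ S, s⁻¹ ∈ S) (hgen : Subgroup.closure S = ⊤) (g h : G) :
    ∃ l : List G, l.length = wordDist S g h ∧ (∀ x ∈ l, x ∈ S) ∧ l.prod = g⁻¹ * h := by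
  have hne : {n | ∃ l : List G, l.length = n ∧ (∀ x ∈ l, x ∈ S) ∧ l.prod = g⁻¹ * h}.Nonempty := by
    obtain ⟨l, hl, hp⟩ := exists_list hSsym hgen (g⁻¹ * h)
    exact ⟨l.length, l, rfl, hl, hp⟩
  exact Nat.sInf_mem hne

lemma self (S : Set G) (g : G) : wordDist S g g = 0 :=
  Nat.le_zero.mp (le_length g g [] (by simp) (by simp))

lemma triangle (hSsym : ∀ s ∈ S, s⁻¹ ∈ S) (hgen : Subgroup.closure S = ⊤) (g h k : G) :
    wordDist S g k ≤ wordDist S g h + wordDist S h k := by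
  obtain ⟨l1, hl1, hm1, hp1⟩ := min_list hSsym hgen g h
  obtain ⟨l2, hl2, hm2, hp2⟩ := min_list hSsym hgen h k
  have hmem : ∀ x ∈ l1 ++ l2, x ∈ S := by
    intro a ha
    rcases List.mem_append.mp ha with h' | h'
    exacts [hm1 a h', hm2 a h']
  have := le_length g k (l1 ++ l2) hmem
    (by rw [List.prod_append, hp1, hp2, mul_assoc, mul_inv_cancel_left])
  simpa [hl1, hl2] using this

lemma symm_le (hSsym : ∀ s ∈ S, s⁻¹ ∈ S) (hgen : Subgroup.closure S = ⊤) (g h : G) :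
    wordDist S h g ≤ wordDist S g h := by
  obtain ⟨l, hl, hm, hp⟩ := min_list hSsym hgen g h
  have hmem : ∀ x ∈ (l.map (fun a => a⁻¹)).reverse, x ∈ S := by
    intro a ha
    simp only [List.mem_reverse, List.mem_map] at ha
    obtain ⟨b, hb, rfl⟩ := ha
    exact hSsym b (hm b hb)
  have hprod : ((l.map (fun a => a⁻¹)).reverse).prod = h⁻¹ * g := by
    rw [← List.prod_inv_reverse, hp]; simp
  have := le_length h g _ hmem hprod
  simpa [hl] using this

lemma symm (hSsym : ∀ s ∈ S, s⁻¹ ∈ S) (hgen : Subgroup.closure S = ⊤) (g h : G) :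
    wordDist S g h = wordDist S h g :=
  le_antisymm (symm_le hSsym hgen h g) (symm_le hSsym hgen g h)

lemma left_inv (S : Set G) (g a b : G) : wordDist S (g * a) (g * b) = wordDist S a b := by
  have : (g * a)⁻¹ * (g * b) = a⁻¹ * b := by group
  simp only [wordDist, this]

lemma ball_finite (hSfin : S.Finite) (hSsym : ∀ s ∈ S, s⁻¹ ∈ S)
    (hgen : Subgroup.closure S = ⊤) (R : ℕ) : {h : G | wordDist S 1 h ≤ R}.Finite := by
  haveI : Finite ↥S := hSfin.to_subtype
  apply Set.Finite.subset ((List.finite_length_le ↥S R).image (fun l => (l.map Subtype.val).prod))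
  intro h hh
  obtain ⟨l, hl, hm, hp⟩ := min_list hSsym hgen 1 h
  refine ⟨l.attach.map (fun x => (⟨x.1, hm x.1 x.2⟩ : ↥S)), ?_, ?_⟩
  · simpa [hl] using hh
  · show ((l.attach.map (fun x => (⟨x.1, hm x.1 x.2⟩ : ↥S))).map Subtype.val).prod = h
    have heq : (l.attach.map (fun x => (⟨x.1, hm x.1 x.2⟩ : ↥S))).map Subtype.val = l := by
      simp [List.map_map]
    rw [heq, hp]; simp

lemma countable (hSfin : S.Finite) (hSsym : ∀ s ∈ S, s⁻¹ ∈ S)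
    (hgen : Subgroup.closure S = ⊤) : Countable G := by
  haveI : Finite ↥S := hSfin.to_subtype
  haveI : Countable (List ↥S) := inferInstance
  apply Function.Surjective.countable (f := fun l : List ↥S => (l.map Subtype.val).prod)
  intro g
  obtain ⟨l, hm, hp⟩ := exists_list hSsym hgen g
  refine ⟨l.attach.map (fun x => (⟨x.1, hm x.1 x.2⟩ : ↥S)), ?_⟩
  show ((l.attach.map (fun x => (⟨x.1, hm x.1 x.2⟩ : ↥S))).map Subtype.val).prod = g
  have heq : (l.attach.map (fun x => (⟨x.1, hm x.1 x.2⟩ : ↥S))).map Subtype.val = l := by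
    simp [List.map_map]
  rw [heq, hp]



lemma int_gap (a b : ℕ → ℕ) (L : ℝ)
    (h : Filter.Tendsto (fun k => (a k : ℝ) - b k) atTop (𝓝 L)) :
    ∃ N : ℕ, ∀ k ≥ N, (a k : ℝ) - (b k : ℝ) = L := by
  obtain ⟨N, hN⟩ := Metric.tendsto_atTop.mp h (1/2) (by norm_num)
  have key : ∀ k ≥ N, (a k : ℝ) - b k = (a N : ℝ) - b N := by
    intro k hk
    have h1 := hN k hk
    have h2 := hN N le_rfl
    rw [Real.dist_eq] at h1 h2
    have h1' := abs_lt.mp h1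
    have h2' := abs_lt.mp h2
    have hlt : (((a k : ℤ) - b k - ((a N : ℤ) - b N) : ℤ) : ℝ) < 1 := by push_cast; linarith
    have hgt : (-1 : ℝ) < (((a k : ℤ) - b k - ((a N : ℤ) - b N) : ℤ) : ℝ) := by push_cast; linarith
    have hlt' : ((a k : ℤ) - b k - ((a N : ℤ) - b N) : ℤ) < 1 := by exact_mod_cast hlt
    have hgt' : (-1 : ℤ) < ((a k : ℤ) - b k - ((a N : ℤ) - b N) : ℤ) := by exact_mod_cast hgt
    have hz : ((a k : ℤ) - b k : ℤ) = ((a N : ℤ) - b N : ℤ) := by omega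
    have : (((a k : ℤ) - b k : ℤ) : ℝ) = (((a N : ℤ) - b N : ℤ) : ℝ) := by exact_mod_cast hz
    push_cast at this
    linarith
  have hL : L = (a N : ℝ) - b N := by
    have ht : Filter.Tendsto (fun k => (a k : ℝ) - b k) atTop (𝓝 ((a N : ℝ) - b N)) := by
      apply Filter.Tendsto.congr' _ tendsto_const_nhds
      filter_upwards [Filter.eventually_atTop.mpr ⟨N, key⟩] with k hk
      exact hk.symm
    exact tendsto_nhds_unique h ht
  exact ⟨N, fun k hk => by rw [key k hk, hL]⟩

lemma seq_extract (t : ℕ → ℕ) (ht : ∀ b : ℕ, ∃ N, ∀ k ≥ N, b ≤ t k) :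
    ∃ φ : ℕ → ℕ, StrictMono φ ∧ StrictMono (t ∘ φ) ∧ 1 ≤ t (φ 0) := by
  have key : ∀ j v : ℕ, ∃ i, j < i ∧ v < t i := by
    intro j v
    obtain ⟨N, hN⟩ := ht (v + 1)
    exact ⟨max N (j + 1), lt_of_lt_of_le (Nat.lt_succ_self j) (le_max_right _ _),
      lt_of_lt_of_le (Nat.lt_succ_self v) (hN _ (le_max_left _ _))⟩
  let φ : ℕ → ℕ := fun n => Nat.rec (Classical.choose (key 0 0))
    (fun _ ih => Classical.choose (key ih (t ih))) n
  have h0 : 0 < t (φ 0) := (Classical.choose_spec (key 0 0)).2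
  have hstep : ∀ n, φ n < φ (n + 1) ∧ t (φ n) < t (φ (n + 1)) := by
    intro n
    exact Classical.choose_spec (key (φ n) (t (φ n)))
  exact ⟨φ, strictMono_nat_of_lt_succ (fun n => (hstep n).1),
    strictMono_nat_of_lt_succ (fun n => (hstep n).2), h0⟩

lemma neBot_of_unbounded {T : Set ℝ} (hT : ∀ M : ℝ, ∃ t ∈ T, M < t) :
    (atTop ⊓ 𝓟 T).NeBot := by
  rw [Filter.inf_principal_neBot_iff]
  intro U hU
  obtain ⟨a, ha⟩ := Filter.mem_atTop_sets.mp hU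
  obtain ⟨t, htT, hat⟩ := hT a
  exact ⟨t, ha t hat.le, htT⟩


lemma geo_B (hSsym : ∀ s ∈ S, s⁻¹ ∈ S) (hgen : Subgroup.closure S = ⊤)
    {T' : Set ℝ} {γ' : ℝ → G} (hsub : T' ⊆ Set.Ici (0:ℝ)) (h0 : (0:ℝ) ∈ T')
    (hγ' : GeodesicRay (fun g h => (wordDist S g h : ℝ)) T' γ') (y : G) :
    ∃ B : ℝ, ∃ N : ℝ, ∀ t ∈ T', N ≤ t → (wordDist S (γ' t) y : ℝ) = t + B := by
  have ht_nat : ∀ t ∈ T', ((wordDist S (γ' 0) (γ' t) : ℝ)) = t := by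
    intro t ht
    have := hγ' 0 h0 t ht
    rwa [zero_sub, abs_neg, abs_of_nonneg (hsub ht)] at this
  have hlow : ∀ t ∈ T', -((wordDist S (γ' 0) y : ℝ)) ≤ (wordDist S (γ' t) y : ℝ) - t := by
    intro t ht
    have h1 : wordDist S (γ' 0) (γ' t) ≤ wordDist S (γ' 0) y + wordDist S y (γ' t) :=
      triangle hSsym hgen _ _ _
    have h2 : wordDist S y (γ' t) = wordDist S (γ' t) y := symm hSsym hgen _ _
    have h3 : ((wordDist S (γ' 0) (γ' t) : ℕ) : ℝ)
        ≤ (wordDist S (γ' 0) y : ℝ) + (wordDist S (γ' t) y : ℝ) := by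
      rw [← h2]; exact_mod_cast h1
    rw [ht_nat t ht] at h3
    linarith
  set P : ℤ → Prop := fun z => ∃ t ∈ T', (wordDist S (γ' t) y : ℝ) - t = (z : ℝ) with hP
  have Hbdd : ∃ bd : ℤ, ∀ z : ℤ, P z → bd ≤ z := by
    refine ⟨-(wordDist S (γ' 0) y : ℤ), ?_⟩
    rintro z ⟨t, ht, hz⟩
    have := hlow t ht
    rw [hz] at this
    exact_mod_cast this
  have Hinh : ∃ z : ℤ, P z := by
    refine ⟨(wordDist S (γ' 0) y : ℤ), 0, h0, ?_⟩
    push_cast; ring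
  obtain ⟨z0, ⟨t0, ht0, hft0⟩, hmin⟩ := Int.exists_least_of_bdd Hbdd Hinh
  refine ⟨(z0 : ℝ), t0, ?_⟩
  intro t ht hle
  have hmono : (wordDist S (γ' t) y : ℝ) - t ≤ (wordDist S (γ' t0) y : ℝ) - t0 := by
    have h1 : wordDist S (γ' t) y ≤ wordDist S (γ' t) (γ' t0) + wordDist S (γ' t0) y :=
      triangle hSsym hgen _ _ _
    have h2 : ((wordDist S (γ' t) (γ' t0) : ℕ) : ℝ) = t - t0 := by
      have := hγ' t ht t0 ht0
      rwa [abs_of_nonneg (by linarith : (0:ℝ) ≤ t - t0)] at this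
    have h3 : ((wordDist S (γ' t) y : ℕ) : ℝ)
        ≤ ((wordDist S (γ' t) (γ' t0) : ℕ) : ℝ) + (wordDist S (γ' t0) y : ℝ) := by exact_mod_cast h1
    rw [h2] at h3; linarith
  have hmem : P ((wordDist S (γ' t) y : ℤ) - (wordDist S (γ' 0) (γ' t) : ℤ)) := by
    refine ⟨t, ht, ?_⟩
    rw [show ((((wordDist S (γ' t) y : ℤ) - (wordDist S (γ' 0) (γ' t) : ℤ)) : ℤ) : ℝ)
      = (wordDist S (γ' t) y : ℝ) - ((wordDist S (γ' 0) (γ' t) : ℕ) : ℝ) by push_cast; ring]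
    rw [ht_nat t ht]
  have hge : (z0 : ℝ) ≤ (wordDist S (γ' t) y : ℝ) - t := by
    have := hmin _ hmem
    have hcast : ((z0 : ℤ) : ℝ) ≤ (((wordDist S (γ' t) y : ℤ) - (wordDist S (γ' 0) (γ' t) : ℤ) : ℤ) : ℝ) := by
      exact_mod_cast this
    have : (((wordDist S (γ' t) y : ℤ) - (wordDist S (γ' 0) (γ' t) : ℤ) : ℤ) : ℝ)
        = (wordDist S (γ' t) y : ℝ) - t := by
      push_cast
      rw [ht_nat t ht]
    linarith
  have : (wordDist S (γ' t0) y : ℝ) - t0 = (z0 : ℝ) := hft0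
  linarith


lemma rigid_apex_translate (g x y z : G) (h : RigidApex (wordDist S) x y z) :
    RigidApex (wordDist S) (g * x) (g * y) (g * z) := by
  intro w hw hc
  have hw' : g⁻¹ * w ≠ x := by
    intro he
    apply hw
    rw [← he]
    group
  apply h (g⁻¹ * w) hw'
  have e1 : wordDist S (g * x) w = wordDist S x (g⁻¹ * w) := by
    conv_lhs => rw [show w = g * (g⁻¹ * w) by group]
    exact left_inv S g x (g⁻¹ * w)
  have e2 : wordDist S w (g * y) = wordDist S (g⁻¹ * w) y := by
    conv_lhs => rw [show w = g * (g⁻¹ * w) by group]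
    exact left_inv S g (g⁻¹ * w) y
  have e3 : wordDist S w (g * z) = wordDist S (g⁻¹ * w) z := by
    conv_lhs => rw [show w = g * (g⁻¹ * w) by group]
    exact left_inv S g (g⁻¹ * w) z
  have e4 : wordDist S (g * x) (g * y) = wordDist S x y := left_inv S g x y
  have e5 : wordDist S (g * x) (g * z) = wordDist S x z := left_inv S g x z
  constructor
  · rw [← e1, ← e2, ← e4]; exact hc.1
  · rw [← e1, ← e3, ← e5]; exact hc.2


end WD

/-- Let `G` be a finitely generated group with finite symmetric generating
set `S` (with `1 ∉ S`) and word metric `d`. If there is some `n` such that for every `m`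
there is a rigid triple `{x,y,z}` with `d(x,y) = n` and perimeter `> m`, then the metric
boundary of the Cayley graph contains a point which is not a Busemann point. -/
theorem stmt8 {G : Type*} [Group G] (S : Set G) (hSfin : S.Finite)
    (hSsym : ∀ s ∈ S, s⁻¹ ∈ S) (hone : (1 : G) ∉ S)
    (hgen : Subgroup.closure S = ⊤)
    (hrigid : ∃ n : ℕ, ∀ m : ℕ, ∃ x y z : G,
      RigidTriple (wordDist S) x y z ∧ wordDist S x y = n ∧
      m < wordDist S x y + wordDist S y z + wordDist S z x) :
    ∃ T : Set ℝ, ∃ γ : ℝ → G, IsRayDomain T ∧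
      WeaklyGeodesicRay (fun g h => (wordDist S g h : ℝ)) T γ ∧
      ∀ (T' : Set ℝ) (γ' : ℝ → G), IsRayDomain T' →
        GeodesicRay (fun g h => (wordDist S g h : ℝ)) T' γ' →
        ∃ (y z : G) (L L' : ℝ),
          RayLimit (fun g h => (wordDist S g h : ℝ)) T γ y z L ∧
          RayLimit (fun g h => (wordDist S g h : ℝ)) T' γ' y z L' ∧ L ≠ L' := by
  classical
  obtain ⟨n, hn⟩ := hrigid
  choose X Y Z hTrip hXY hPer using hn
  set b : ℕ → G := fun m => (X m)⁻¹ * Y m with hb_def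
  set c : ℕ → G := fun m => (X m)⁻¹ * Z m with hc_def
  set r : ℕ → ℕ := fun m => wordDist S 1 (c m) with hr_def
  -- translated basic facts
  have hb_dist : ∀ m, wordDist S 1 (b m) = n := by
    intro m
    have := WD.left_inv S (X m)⁻¹ (X m) (Y m)
    rw [inv_mul_cancel] at this
    rw [hb_def]
    simpa [hXY m] using this
  have hr_eq : ∀ m, r m = wordDist S (X m) (Z m) := by
    intro m
    have := WD.left_inv S (X m)⁻¹ (X m) (Z m)
    rw [inv_mul_cancel] at this
    simpa [hr_def, hc_def] using this
  have hRA : ∀ m, RigidApex (wordDist S) (c m) 1 (b m) := by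
    intro m
    have h6 := (hTrip m).2.2.2.2.2
    have := WD.rigid_apex_translate (S := S) (X m)⁻¹ (Z m) (X m) (Y m) h6
    rwa [inv_mul_cancel] at this
  have hr_growth : ∀ m, m < 2 * n + 2 * r m := by
    intro m
    have h1 := hPer m
    have h2 : wordDist S (Z m) (X m) = r m := by
      rw [hr_eq m]; exact WD.symm hSsym hgen _ _
    have h3 : wordDist S (Y m) (Z m) ≤ wordDist S (Y m) (X m) + wordDist S (X m) (Z m) :=
      WD.triangle hSsym hgen _ _ _
    have h4 : wordDist S (Y m) (X m) = n := by
      rw [← hXY m]; exact WD.symm hSsym hgen _ _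
    have h5 := hr_eq m
    rw [hXY m, h2] at h1
    omega
  -- pigeonhole: fix ybar
  have hballfin : {h : G | wordDist S 1 h ≤ n}.Finite := WD.ball_finite hSfin hSsym hgen n
  haveI : Finite ↥{h : G | wordDist S 1 h ≤ n} := hballfin.to_subtype
  obtain ⟨yb, hyb⟩ := Finite.exists_infinite_fiber
    (fun m => (⟨b m, (hb_dist m).le⟩ : ↥{h : G | wordDist S 1 h ≤ n}))
  set ybar : G := yb.val with hybar_def
  have hfib : {m : ℕ | b m = ybar}.Infinite := by
    rw [← Set.infinite_coe_iff]
    have hsetEq : (fun m => (⟨b m, (hb_dist m).le⟩ : ↥{h : G | wordDist S 1 h ≤ n})) ⁻¹' {yb}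
        = {m : ℕ | b m = ybar} := by
      ext m
      simp [Subtype.ext_iff, hybar_def]
    rw [← hsetEq]
    exact hyb
  set φ₁ : ℕ → ℕ := Nat.nth (fun m => b m = ybar) with hφ₁_def
  have hφ₁mem : ∀ k, b (φ₁ k) = ybar := fun k => Nat.nth_mem_of_infinite hfib k
  have hφ₁mono : StrictMono φ₁ := Nat.nth_strictMono hfib
  -- compactness
  haveI : Countable G := WD.countable hSfin hSsym hgen
  set u : ℕ → (G → ℝ) := fun j w => (wordDist S (c (φ₁ j)) w : ℝ) - r (φ₁ j) with hu_def
  have hK : IsCompact (Set.univ.pi (fun w : G =>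
      Set.Icc (-(wordDist S 1 w : ℝ)) (wordDist S 1 w))) :=
    isCompact_univ_pi (fun w => isCompact_Icc)
  have huK : ∀ j, u j ∈ Set.univ.pi (fun w : G =>
      Set.Icc (-(wordDist S 1 w : ℝ)) (wordDist S 1 w)) := by
    intro j
    rw [Set.mem_univ_pi]
    intro w
    constructor
    · have h1 : wordDist S 1 (c (φ₁ j)) ≤ wordDist S 1 w + wordDist S w (c (φ₁ j)) :=
        WD.triangle hSsym hgen _ _ _
      have h2 : wordDist S w (c (φ₁ j)) = wordDist S (c (φ₁ j)) w := WD.symm hSsym hgen _ _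
      rw [h2] at h1
      have : ((wordDist S 1 (c (φ₁ j)) : ℕ) : ℝ)
          ≤ (wordDist S 1 w : ℝ) + (wordDist S (c (φ₁ j)) w : ℝ) := by exact_mod_cast h1
      simp only [hu_def]
      have hrj : ((r (φ₁ j) : ℕ) : ℝ) = ((wordDist S 1 (c (φ₁ j)) : ℕ) : ℝ) := by rw [hr_def]
      linarith
    · have h1 : wordDist S (c (φ₁ j)) w ≤ wordDist S (c (φ₁ j)) 1 + wordDist S 1 w :=
        WD.triangle hSsym hgen _ _ _
      have h2 : wordDist S (c (φ₁ j)) 1 = wordDist S 1 (c (φ₁ j)) := WD.symm hSsym hgen _ _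
      rw [h2] at h1
      have : ((wordDist S (c (φ₁ j)) w : ℕ) : ℝ)
          ≤ (wordDist S 1 (c (φ₁ j)) : ℝ) + (wordDist S 1 w : ℝ) := by exact_mod_cast h1
      simp only [hu_def]
      have hrj : ((r (φ₁ j) : ℕ) : ℝ) = ((wordDist S 1 (c (φ₁ j)) : ℕ) : ℝ) := by rw [hr_def]
      linarith
  obtain ⟨H, _HK, φ₂, hφ₂mono, hconv⟩ := hK.tendsto_subseq huK
  have hpt : ∀ w : G, Tendsto (fun j => u (φ₂ j) w) atTop (𝓝 (H w)) := by
    intro w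
    exact tendsto_pi_nhds.mp hconv w
  -- growth along φ₁ ∘ φ₂ and time extraction
  have hgrow : ∀ bnd : ℕ, ∃ N, ∀ k ≥ N, bnd ≤ r (φ₁ (φ₂ k)) := by
    intro bnd
    refine ⟨2 * bnd + 2 * n, fun k hk => ?_⟩
    have h1 : k ≤ φ₁ (φ₂ k) := le_trans (hφ₂mono.le_apply) (hφ₁mono.le_apply)
    have h2 := hr_growth (φ₁ (φ₂ k))
    omega
  obtain ⟨φ₃, hφ₃mono, htmono, ht1⟩ := WD.seq_extract (fun k => r (φ₁ (φ₂ k))) hgrow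
  set ν : ℕ → ℕ := fun k => φ₁ (φ₂ (φ₃ k)) with hν_def
  set tk : ℕ → ℕ := fun k => r (ν k) with htk_def
  have htkmono : StrictMono tk := htmono
  have htk1 : ∀ k, 1 ≤ tk k := by
    intro k
    calc 1 ≤ tk 0 := ht1
    _ ≤ tk k := (htkmono.monotone (Nat.zero_le k))
  have hconvν : ∀ w : G, Tendsto (fun k => (wordDist S (c (ν k)) w : ℝ) - (tk k : ℝ))
      atTop (𝓝 (H w)) := by
    intro w
    exact (hpt w).comp hφ₃mono.tendsto_atTop
  have hev : ∀ w : G, ∃ N, ∀ k ≥ N, (wordDist S (c (ν k)) w : ℝ) - (tk k : ℝ) = H w := by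
    intro w
    exact WD.int_gap (fun k => wordDist S (c (ν k)) w) tk (H w) (hconvν w)
  have hd_c1 : ∀ k, wordDist S (c (ν k)) 1 = tk k := by
    intro k
    rw [htk_def]
    exact WD.symm hSsym hgen _ _
  have hH1 : H 1 = 0 := by
    have h1 : Tendsto (fun k => (wordDist S (c (ν k)) 1 : ℝ) - (tk k : ℝ)) atTop (𝓝 0) := by
      have : (fun k => (wordDist S (c (ν k)) 1 : ℝ) - (tk k : ℝ)) = fun _ => (0:ℝ) := by
        funext k
        rw [hd_c1 k]
        ring
      rw [this]
      exact tendsto_const_nhds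
    exact (tendsto_nhds_unique (hconvν 1) h1)
  -- the ray
  set T : Set ℝ := insert (0:ℝ) (Set.range (fun k => ((tk k : ℕ) : ℝ))) with hT_def
  set γ : ℝ → G := fun t =>
    if h : ∃ k, ((tk k : ℕ) : ℝ) = t then c (ν (Classical.choose h)) else 1 with hγ_def
  have hγ0 : γ 0 = 1 := by
    have hne : ¬ ∃ k, ((tk k : ℕ) : ℝ) = 0 := by
      rintro ⟨k, hk⟩
      have h1 := htk1 k
      have h2 : (1:ℝ) ≤ ((tk k : ℕ) : ℝ) := by exact_mod_cast h1
      linarith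
    show (if h : ∃ k, ((tk k : ℕ) : ℝ) = 0 then c (ν (Classical.choose h)) else 1) = 1
    rw [dif_neg hne]
  have hγtk : ∀ k, γ ((tk k : ℕ) : ℝ) = c (ν k) := by
    intro k
    have hex : ∃ k', ((tk k' : ℕ) : ℝ) = ((tk k : ℕ) : ℝ) := ⟨k, rfl⟩
    show (if h : ∃ k', ((tk k' : ℕ) : ℝ) = ((tk k : ℕ) : ℝ) then c (ν (Classical.choose h)) else 1)
      = c (ν k)
    rw [dif_pos hex]
    have hspec := Classical.choose_spec hex
    have h1 : tk (Classical.choose hex) = tk k := by exact_mod_cast hspec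
    have h2 : Classical.choose hex = k := htkmono.injective h1
    rw [h2]
  -- decode membership in T
  have hdecode : ∀ s ∈ T, (1:ℝ) ≤ s → ∃ k, ((tk k : ℕ) : ℝ) = s := by
    intro s hs h1s
    rcases hs with h0 | ⟨k, hk⟩
    · exfalso; rw [h0] at h1s; linarith
    · exact ⟨k, hk⟩
  refine ⟨T, γ, ⟨?_, ?_, ?_⟩, ?_, ?_⟩
  · -- T ⊆ Ici 0
    intro t ht
    rcases ht with h0 | ⟨k, hk⟩
    · rw [h0]; exact Set.mem_Ici.mpr le_rfl
    · rw [← hk]; exact Set.mem_Ici.mpr (Nat.cast_nonneg _)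
  · exact Set.mem_insert _ _
  · -- unbounded
    intro M
    obtain ⟨k, hk⟩ := exists_nat_gt M
    refine ⟨((tk k : ℕ) : ℝ), Set.mem_insert_of_mem _ ⟨k, rfl⟩, ?_⟩
    have h1 : (k : ℝ) ≤ ((tk k : ℕ) : ℝ) := by exact_mod_cast htkmono.le_apply
    linarith
  · -- weakly geodesic
    intro y ε hε
    obtain ⟨N₀, hN₀⟩ := Metric.tendsto_atTop.mp (hconvν y) (ε/2) (half_pos hε)
    refine ⟨((tk N₀ : ℕ) : ℝ), ?_⟩
    intro s hs t ht hNs hNt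
    have h1N : (1:ℝ) ≤ ((tk N₀ : ℕ) : ℝ) := by exact_mod_cast htk1 N₀
    obtain ⟨ks, hks⟩ := hdecode s hs (le_trans h1N hNs)
    obtain ⟨kt, hkt⟩ := hdecode t ht (le_trans h1N hNt)
    have hksN : N₀ ≤ ks := by
      have : tk N₀ ≤ tk ks := by
        have : ((tk N₀ : ℕ) : ℝ) ≤ ((tk ks : ℕ) : ℝ) := by rw [hks]; exact hNs
        exact_mod_cast this
      exact htkmono.le_iff_le.mp this
    have hktN : N₀ ≤ kt := by
      have : tk N₀ ≤ tk kt := by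
        have : ((tk N₀ : ℕ) : ℝ) ≤ ((tk kt : ℕ) : ℝ) := by rw [hkt]; exact hNt
        exact_mod_cast this
      exact htkmono.le_iff_le.mp this
    have hγs : γ s = c (ν ks) := by rw [← hks]; exact hγtk ks
    have hγt : γ t = c (ν kt) := by rw [← hkt]; exact hγtk kt
    constructor
    · show |((wordDist S (γ t) (γ 0) : ℕ) : ℝ) - t| < ε
      rw [hγt, hγ0, hd_c1 kt, ← hkt]
      simpa using hε
    · have h1 := hN₀ kt hktN
      have h2 := hN₀ ks hksN
      rw [Real.dist_eq] at h1 h2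
      obtain ⟨e1a, e1b⟩ := abs_lt.mp h1
      obtain ⟨e2a, e2b⟩ := abs_lt.mp h2
      show |((wordDist S (γ t) y : ℕ) : ℝ) - ((wordDist S (γ s) y : ℕ) : ℝ) - (t - s)| < ε
      rw [hγs, hγt, ← hks, ← hkt, abs_lt]
      constructor <;> linarith
  · -- main part
    intro T' γ' hT' hγ'
    have hRL : ∀ y z : G, RayLimit (fun g h => (wordDist S g h : ℝ)) T γ y z (H y - H z) := by
      intro y z
      obtain ⟨Ny, hNy⟩ := hev y
      obtain ⟨Nz, hNz⟩ := hev z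
      set Nm := max Ny Nz with hNm
      apply Filter.Tendsto.congr' _ tendsto_const_nhds
      have hmem : Set.Ici ((tk Nm : ℕ) : ℝ) ∩ T ∈ atTop ⊓ 𝓟 T :=
        Filter.inter_mem_inf (Filter.mem_atTop _) (Filter.mem_principal_self T)
      apply Filter.eventuallyEq_of_mem hmem
      rintro t ⟨htI, htT⟩
      have h1N : (1:ℝ) ≤ ((tk Nm : ℕ) : ℝ) := by exact_mod_cast htk1 Nm
      obtain ⟨k, hk⟩ := hdecode t htT (le_trans h1N htI)
      have hkN : Nm ≤ k := by
        have h2 : tk Nm ≤ tk k := by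
          have h3 : ((tk Nm : ℕ) : ℝ) ≤ ((tk k : ℕ) : ℝ) := by rw [hk]; exact htI
          exact_mod_cast h3
        exact htkmono.le_iff_le.mp h2
      have hγt : γ t = c (ν k) := by rw [← hk]; exact hγtk k
      have ey := hNy k (le_trans (le_max_left _ _) hkN)
      have ez := hNz k (le_trans (le_max_right _ _) hkN)
      show H y - H z = ((wordDist S (γ t) y : ℕ) : ℝ) - ((wordDist S (γ t) z : ℕ) : ℝ)
      rw [hγt]
      linarith
    by_contra hcon
    push_neg at hcon
    obtain ⟨hsub', h0', hunb'⟩ := hT'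
    -- Busemann data of the geodesic ray
    obtain ⟨B1, N1, hB1⟩ := WD.geo_B hSsym hgen hsub' h0' hγ' (1 : G)
    obtain ⟨By, Ny', hBy⟩ := WD.geo_B hSsym hgen hsub' h0' hγ' ybar
    have hRL' : ∀ (y z : G) (Byy Bzz Nyy Nzz : ℝ),
        (∀ t ∈ T', Nyy ≤ t → (wordDist S (γ' t) y : ℝ) = t + Byy) →
        (∀ t ∈ T', Nzz ≤ t → (wordDist S (γ' t) z : ℝ) = t + Bzz) →
        RayLimit (fun g h => (wordDist S g h : ℝ)) T' γ' y z (Byy - Bzz) := by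
      intro y z Byy Bzz Nyy Nzz hy hz
      apply Filter.Tendsto.congr' _ tendsto_const_nhds
      have hmem : Set.Ici (max Nyy Nzz) ∩ T' ∈ atTop ⊓ 𝓟 T' :=
        Filter.inter_mem_inf (Filter.mem_atTop _) (Filter.mem_principal_self T')
      apply Filter.eventuallyEq_of_mem hmem
      rintro t ⟨htI, htT⟩
      show Byy - Bzz = ((wordDist S (γ' t) y : ℕ) : ℝ) - ((wordDist S (γ' t) z : ℕ) : ℝ)
      have e1 := hy t htT (le_trans (le_max_left _ _) htI)
      have e2 := hz t htT (le_trans (le_max_right _ _) htI)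
      rw [e1, e2]
      ring
    -- H ybar = By - B1
    have hHybar : H ybar - H 1 = By - B1 :=
      hcon ybar 1 (H ybar - H 1) (By - B1) (hRL ybar 1) (hRL' ybar 1 By B1 Ny' N1 hBy hB1)
    -- pick times t1 < t2
    obtain ⟨t1, ht1T, ht1⟩ := hunb' (max N1 Ny')
    obtain ⟨t2, ht2T, ht2⟩ := hunb' (max t1 (max N1 Ny'))
    have ht1N1 : N1 ≤ t1 := le_trans (le_max_left _ _) ht1.le
    have ht1Ny : Ny' ≤ t1 := le_trans (le_max_right _ _) ht1.le
    have ht2t1 : t1 < t2 := lt_of_le_of_lt (le_max_left _ _) ht2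
    have ht2N1 : N1 ≤ t2 := le_trans (le_trans (le_max_left _ _) (le_max_right t1 _)) ht2.le
    have ht2Ny : Ny' ≤ t2 := le_trans (le_trans (le_max_right _ _) (le_max_right t1 _)) ht2.le
    -- H of ray points
    have hp : ∀ t0 ∈ T', N1 ≤ t0 → H (γ' t0) = -t0 - B1 := by
      intro t0 ht0T ht0N
      have hform : ∀ t ∈ T', max t0 N1 ≤ t → (wordDist S (γ' t) (γ' t0) : ℝ) = t + (-t0) := by
        intro t htT htge
        have hgeo : ((wordDist S (γ' t) (γ' t0) : ℕ) : ℝ) = |t - t0| := hγ' t htT t0 ht0T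
        rw [abs_of_nonneg (by
          have := le_trans (le_max_left _ _) htge
          linarith : (0:ℝ) ≤ t - t0)] at hgeo
        rw [hgeo]; ring
      have h1 : RayLimit (fun g h => (wordDist S g h : ℝ)) T' γ' (γ' t0) 1 ((-t0) - B1) :=
        hRL' (γ' t0) 1 (-t0) B1 (max t0 N1) N1 hform hB1
      have h2 := hcon (γ' t0) 1 (H (γ' t0) - H 1) ((-t0) - B1) (hRL (γ' t0) 1) h1
      rw [hH1] at h2
      linarith
    have hp1 : H (γ' t1) = -t1 - B1 := hp t1 ht1T ht1N1
    have hp2 : H (γ' t2) = -t2 - B1 := hp t2 ht2T ht2N1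
    -- choose a large index k
    obtain ⟨Na, hNa⟩ := hev (γ' t1)
    obtain ⟨Nb, hNb⟩ := hev (γ' t2)
    obtain ⟨Nc, hNc⟩ := hev ybar
    set k := max Na (max Nb Nc) with hk_def
    have e1 : (wordDist S (c (ν k)) (γ' t1) : ℝ) = (tk k : ℝ) + H (γ' t1) := by
      have := hNa k (le_max_left _ _)
      linarith
    have e2 : (wordDist S (c (ν k)) (γ' t2) : ℝ) = (tk k : ℝ) + H (γ' t2) := by
      have := hNb k (le_trans (le_max_left _ _) (le_max_right _ _))
      linarith
    have e3 : (wordDist S (c (ν k)) ybar : ℝ) = (tk k : ℝ) + H ybar := by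
      have := hNc k (le_trans (le_max_right _ _) (le_max_right _ _))
      linarith
    have f1 : (wordDist S (γ' t1) 1 : ℝ) = t1 + B1 := hB1 t1 ht1T ht1N1
    have f2 : (wordDist S (γ' t2) 1 : ℝ) = t2 + B1 := hB1 t2 ht2T ht2N1
    have g1 : (wordDist S (γ' t1) ybar : ℝ) = t1 + By := hBy t1 ht1T ht1Ny
    have g2 : (wordDist S (γ' t2) ybar : ℝ) = t2 + By := hBy t2 ht2T ht2Ny
    have rr : wordDist S (c (ν k)) 1 = tk k := hd_c1 k
    have hRAk : RigidApex (wordDist S) (c (ν k)) 1 ybar := by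
      have := hRA (ν k)
      rwa [hφ₁mem (φ₂ (φ₃ k))] at this
    -- p1 = c (ν k)
    have hpc : ∀ t0 ∈ T', N1 ≤ t0 → Ny' ≤ t0 →
        (wordDist S (c (ν k)) (γ' t0) : ℝ) = (tk k : ℝ) + H (γ' t0) → γ' t0 = c (ν k) := by
      intro t0 ht0T ht0N1 ht0Ny he
      by_contra hne
      apply hRAk (γ' t0) hne
      have hf : (wordDist S (γ' t0) 1 : ℝ) = t0 + B1 := hB1 t0 ht0T ht0N1
      have hg : (wordDist S (γ' t0) ybar : ℝ) = t0 + By := hBy t0 ht0T ht0Ny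
      have hH : H (γ' t0) = -t0 - B1 := hp t0 ht0T ht0N1
      constructor
      · have hcast : ((wordDist S (c (ν k)) (γ' t0) + wordDist S (γ' t0) 1 : ℕ) : ℝ)
            = ((wordDist S (c (ν k)) 1 : ℕ) : ℝ) := by
          push_cast
          rw [he, hf, hH, rr]
          ring
        exact Nat.cast_injective hcast
      · have hyeq : H ybar = By - B1 := by rw [hH1] at hHybar; linarith
        have hcast : ((wordDist S (c (ν k)) (γ' t0) + wordDist S (γ' t0) ybar : ℕ) : ℝ)
            = ((wordDist S (c (ν k)) ybar : ℕ) : ℝ) := by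
          push_cast
          rw [he, hg, hH, e3, hyeq]
          ring
        exact Nat.cast_injective hcast
    have hc1 : γ' t1 = c (ν k) := hpc t1 ht1T ht1N1 ht1Ny e1
    have hc2 : γ' t2 = c (ν k) := hpc t2 ht2T ht2N1 ht2Ny e2
    have hfin : ((wordDist S (γ' t1) (γ' t2) : ℕ) : ℝ) = |t1 - t2| := hγ' t1 ht1T t2 ht2T
    rw [hc1, hc2, WD.self S] at hfin
    have habs : |t1 - t2| = t2 - t1 := by
      rw [abs_sub_comm]
      exact abs_of_nonneg (by linarith)
    rw [habs] at hfin
    simp only [Nat.cast_zero] at hfin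
    linarith
end

section
/- Let G be a finitely generated abelian group with finite symmetric generating set S = S⁻¹ (1 ∉ S) and word metric d. Then there is a constant C (depending only on G and S) such that every rigid triple {x,y,z} in (G,d) satisfies d(x,y) + d(y,z) + d(z,x) ≤ C · d(x,y). -/
open Filter Topology

/-!
By left-invariance put the apex of a rigid triple at `1`, with other vertices `u`, `v`. Since `G` is
abelian, a word over `S` matters only through its exponent vector in `ℕ^S`, and the product of any
sub-vector of a geodesic exponent vector of `u` lies on a geodesic from `1` to `u`. Take geodesic
exponent vectors `α`, `γ`, `η` of `u`, `v`, `u⁻¹ v`. Rigidity at `1` then forbids a nontrivial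
relation `(a, b)` (meaning `∏ s ^ a s = ∏ s ^ b s`) with `a ≤ γ` and `b ≤ α`. By Dickson's lemma every
nontrivial relation dominates one of size at most some `Γ`. Peeling such small relations off the
relation `(γ, α + η)` lowers the excess `∑ (b - α)` of the second component over `α`, which starts
at `|η|`, by at least one each time; hence `|α| + |γ| + |η| ≤ Γ |η|`.
-/

theorem WellQuasiOrderedLE.exists_bound_exists_le {α : Type*} [PartialOrder α]
    [WellQuasiOrderedLE α] (P : α → Prop) (f : α → ℕ) :
    ∃ N, ∀ x, P x → ∃ y ≤ x, P y ∧ f y ≤ N := by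
  have hfin : {x | Minimal P x}.Finite :=
    WellQuasiOrderedLE.finite_of_isAntichain (setOfPred_minimal_antichain P)
  obtain ⟨N, hN⟩ := (hfin.image f).bddAbove
  refine ⟨N, fun x hx => ?_⟩
  obtain ⟨y, hyx, hy⟩ := exists_minimal_le_of_wellFoundedLT P x hx
  exact ⟨y, hyx, hy.prop, hN ⟨y, hy, rfl⟩⟩

theorem Subgroup.closure_toSubmonoid_of_inv_mem {G : Type*} [Group G] {S : Set G}
    (hS : ∀ s ∈ S, s⁻¹ ∈ S) : (Subgroup.closure S).toSubmonoid = Submonoid.closure S := by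
  rw [Subgroup.closure_toSubmonoid,
    Set.union_eq_self_of_subset_right fun s hs => by simpa using hS _ hs]

theorem RigidApex.map {V : Type*} {d : V → V → ℕ} {x y z : V} (f : V ≃ V)
    (hf : ∀ a b, d (f a) (f b) = d a b) (h : RigidApex d x y z) :
    RigidApex d (f x) (f y) (f z) := by
  intro w hw
  obtain ⟨w, rfl⟩ := f.surjective w
  simpa only [hf] using h w (fun hwx => hw (hwx ▸ rfl))

theorem sum_tsub_add_sum {ι : Type*} [Fintype ι] {c d : ι → ℕ} (h : d ≤ c) :
    ∑ i, (c - d) i + ∑ i, d i = ∑ i, c i := by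
  rw [← Finset.sum_add_distrib]
  exact Finset.sum_congr rfl fun i _ => tsub_add_cancel_of_le (h i)

noncomputable def wordNorm {G : Type*} [Group G] (S : Set G) (g : G) : ℕ :=
  sInf {n | ∃ l : List G, l.length = n ∧ (∀ x ∈ l, x ∈ S) ∧ l.prod = g}

section Group

variable {G : Type*} [Group G] {S : Set G}

theorem wordDist_eq_wordNorm (g h : G) : wordDist S g h = wordNorm S (g⁻¹ * h) := rfl

theorem wordDist_mul_left (g a b : G) : wordDist S (g * a) (g * b) = wordDist S a b := by
  simp only [wordDist_eq_wordNorm, mul_inv_rev, mul_assoc, inv_mul_cancel_left]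

theorem wordNorm_le_length {l : List G} (hl : ∀ x ∈ l, x ∈ S) : wordNorm S l.prod ≤ l.length :=
  Nat.sInf_le ⟨l, rfl, hl, rfl⟩

theorem wordNorm_one : wordNorm S (1 : G) = 0 :=
  Nat.le_zero.1 (wordNorm_le_length (l := []) (by simp))

theorem wordNorm_inv (hS : ∀ s ∈ S, s⁻¹ ∈ S) (g : G) : wordNorm S g⁻¹ = wordNorm S g := by
  have key : ∀ (g : G) (l : List G), (∀ x ∈ l, x ∈ S) → l.prod = g →
      ∃ l' : List G, l'.length = l.length ∧ (∀ x ∈ l', x ∈ S) ∧ l'.prod = g⁻¹ := by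
    rintro g l hl rfl
    refine ⟨(l.map (·⁻¹)).reverse, by simp, ?_, (List.prod_inv_reverse l).symm⟩
    simp only [List.mem_reverse, List.mem_map]
    rintro _ ⟨x, hx, rfl⟩
    exact hS x (hl x hx)
  unfold wordNorm
  congr 1
  ext n
  constructor
  · rintro ⟨l, rfl, hl, hprod⟩
    simpa using key _ l hl hprod
  · rintro ⟨l, rfl, hl, rfl⟩
    exact key _ l hl rfl

theorem wordDist_comm (hS : ∀ s ∈ S, s⁻¹ ∈ S) (g h : G) : wordDist S g h = wordDist S h g := by
  rw [wordDist_eq_wordNorm, wordDist_eq_wordNorm, ← wordNorm_inv hS, mul_inv_rev, inv_inv]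

variable (hS : Submonoid.closure S = ⊤)
include hS

theorem exists_list_length_eq_wordNorm (g : G) :
    ∃ l : List G, l.length = wordNorm S g ∧ (∀ x ∈ l, x ∈ S) ∧ l.prod = g := by
  obtain ⟨l, hl, rfl⟩ := Submonoid.exists_list_of_mem_closure (hS ▸ Submonoid.mem_top g)
  exact Nat.sInf_mem (s := {n | ∃ l : List G, l.length = n ∧ (∀ x ∈ l, x ∈ S) ∧ l.prod = _})
    ⟨l.length, l, rfl, hl, rfl⟩

theorem wordNorm_mul_le (g h : G) : wordNorm S (g * h) ≤ wordNorm S g + wordNorm S h := by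
  obtain ⟨l₁, h₁, hl₁, rfl⟩ := exists_list_length_eq_wordNorm hS g
  obtain ⟨l₂, h₂, hl₂, rfl⟩ := exists_list_length_eq_wordNorm hS h
  rw [← h₁, ← h₂, ← List.prod_append, ← List.length_append]
  exact wordNorm_le_length fun x hx => (List.mem_append.1 hx).elim (hl₁ x) (hl₂ x)

end Group

def expProd {G : Type*} [CommGroup G] (S : Set G) [Fintype S] (c : S → ℕ) : G :=
  ∏ s : S, (s : G) ^ c s

def IsGeodesicExponent {G : Type*} [CommGroup G] (S : Set G) [Fintype S] (c : S → ℕ) (g : G) :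
    Prop :=
  expProd S c = g ∧ ∑ s, c s = wordNorm S g

def IsNontrivialRelation {G : Type*} [CommGroup G] (S : Set G) [Fintype S]
    (r : (S → ℕ) × (S → ℕ)) : Prop :=
  r ≠ 0 ∧ expProd S r.1 = expProd S r.2

section ExponentVectors

variable {G : Type*} [CommGroup G] {S : Set G} [Fintype S]

theorem expProd_add (c d : S → ℕ) : expProd S (c + d) = expProd S c * expProd S d := by
  simp only [expProd, Pi.add_apply, pow_add, Finset.prod_mul_distrib]

theorem expProd_sub_mul {c d : S → ℕ} (h : d ≤ c) :
    expProd S (c - d) * expProd S d = expProd S c := by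
  rw [← expProd_add, tsub_add_cancel_of_le h]

theorem wordNorm_expProd_le (c : S → ℕ) : wordNorm S (expProd S c) ≤ ∑ s, c s := by
  let l := Finset.univ.toList.flatMap fun s : S => List.replicate (c s) (s : G)
  have hl : ∀ x ∈ l, x ∈ S := by simp +contextual [l, List.mem_replicate]
  have hprod : l.prod = expProd S c := by
    simp [l, expProd, List.flatMap, List.prod_flatten, Function.comp_def, Finset.prod_map_toList]
  have hlen : l.length = ∑ s, c s := by
    simp [l, List.length_flatMap, Finset.sum_map_toList]
  exact hprod ▸ hlen ▸ wordNorm_le_length hl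

theorem exists_expProd_eq_list_prod {l : List G} (hl : ∀ x ∈ l, x ∈ S) :
    ∃ c : S → ℕ, expProd S c = l.prod ∧ ∑ s, c s = l.length := by
  classical
  lift l to List S using hl
  refine ⟨fun s => Multiset.count s l, ?_, ?_⟩
  · rw [expProd, ← Multiset.prod_coe, ← Multiset.map_coe, Finset.prod_multiset_map_count]
    refine (Finset.prod_subset (Finset.subset_univ _) fun s _ hs => ?_).symm
    simp only [Multiset.count_eq_zero_of_notMem (Multiset.mem_toFinset.not.1 hs), pow_zero]
  · simpa using Multiset.sum_count_eq_card (s := Finset.univ) (m := (l : Multiset S)) (by simp)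

theorem exists_isGeodesicExponent (hS : Submonoid.closure S = ⊤) (g : G) :
    ∃ c, IsGeodesicExponent S c g := by
  obtain ⟨l, hlen, hl, rfl⟩ := exists_list_length_eq_wordNorm hS g
  obtain ⟨c, hc, hsum⟩ := exists_expProd_eq_list_prod hl
  exact ⟨c, hc, hsum.trans hlen⟩

theorem IsGeodesicExponent.of_le (hS : Submonoid.closure S = ⊤) {c d : S → ℕ} {g : G}
    (h : IsGeodesicExponent S c g) (hdc : d ≤ c) :
    wordNorm S (expProd S d) = ∑ s, d s ∧
      wordNorm S (expProd S d) + wordNorm S ((expProd S d)⁻¹ * g) = wordNorm S g := by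
  obtain ⟨rfl, hc⟩ := h
  have hsum := sum_tsub_add_sum hdc
  have hquot : (expProd S d)⁻¹ * expProd S c = expProd S (c - d) := by
    rw [inv_mul_eq_iff_eq_mul, ← expProd_sub_mul hdc, mul_comm]
  have h₁ := wordNorm_expProd_le d
  have h₂ := wordNorm_expProd_le (c - d)
  have h₃ := wordNorm_mul_le hS (expProd S (c - d)) (expProd S d)
  rw [expProd_sub_mul hdc] at h₃
  rw [hquot]
  omega

theorem sum_add_sum_le_mul_sum_sub {Γ : ℕ}
    (hΓ : ∀ r, IsNontrivialRelation S r →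
      ∃ r' ≤ r, IsNontrivialRelation S r' ∧ ∑ s, r'.1 s + ∑ s, r'.2 s ≤ Γ)
    {α γ : S → ℕ} (hαγ : ∀ a ≤ γ, ∀ b ≤ α, ¬IsNontrivialRelation S (a, b))
    {a b : S → ℕ} (hab : expProd S a = expProd S b) (haγ : a ≤ γ) :
    ∑ s, a s + ∑ s, b s ≤ Γ * ∑ s, (b - α) s := by
  induction hn : ∑ s, (b - α) s using Nat.strong_induction_on generalizing a b with
  | _ n ih =>
  by_cases h0 : (a, b) = 0
  · obtain ⟨rfl, rfl⟩ := Prod.mk_eq_zero.1 h0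
    simp
  obtain ⟨⟨a', b'⟩, hle, ⟨hne, hrel⟩, hsize⟩ := hΓ (a, b) ⟨h0, hab⟩
  obtain ⟨ha', hb'⟩ := Prod.mk_le_mk.1 hle
  obtain ⟨s₀, hs₀⟩ : ∃ s, α s < b' s := by
    by_contra! hb'_le
    exact hαγ a' (ha'.trans haγ) b' hb'_le ⟨hne, hrel⟩
  have hrel' : expProd S (a - a') = expProd S (b - b') := by
    rw [← expProd_sub_mul ha', ← expProd_sub_mul hb', hrel] at hab
    exact mul_right_cancel hab
  have hlt : ∑ s, (b - b' - α) s < n := by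
    rw [← hn]
    refine Finset.sum_lt_sum (fun s _ => ?_) ⟨s₀, Finset.mem_univ _, ?_⟩
    · simp only [Pi.sub_apply]; omega
    · have : b' s₀ ≤ b s₀ := hb' s₀
      simp only [Pi.sub_apply]; omega
  have hIH := ih _ hlt hrel' (tsub_le_self.trans haγ) rfl
  have hsa := sum_tsub_add_sum ha'
  have hsb := sum_tsub_add_sum hb'
  calc ∑ s, a s + ∑ s, b s
      = (∑ s, (a - a') s + ∑ s, (b - b') s) + (∑ s, a' s + ∑ s, b' s) := by omega
    _ ≤ Γ * ∑ s, (b - b' - α) s + Γ := add_le_add hIH hsize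
    _ ≤ Γ * n := by rw [← mul_add_one]; exact Nat.mul_le_mul_left Γ hlt

theorem not_isNontrivialRelation_of_rigidApex_one (hS : Submonoid.closure S = ⊤) {u v : G}
    (hrig : RigidApex (wordDist S) 1 u v) {α γ : S → ℕ} (hα : IsGeodesicExponent S α u)
    (hγ : IsGeodesicExponent S γ v) {a b : S → ℕ} (ha : a ≤ γ) (hb : b ≤ α) :
    ¬IsNontrivialRelation S (a, b) := by
  rintro ⟨hne, hab⟩
  obtain ⟨hνa, hva⟩ := hγ.of_le hS ha
  obtain ⟨hνb, hub⟩ := hα.of_le hS hb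
  rw [hab] at hνa hva
  by_cases hp : expProd S b = 1
  · rw [hp, wordNorm_one, eq_comm, Finset.sum_eq_zero_iff] at hνa hνb
    exact hne (by ext s <;> simp [hνa, hνb])
  · refine hrig _ hp ⟨?_, ?_⟩
    all_goals simpa only [wordDist_eq_wordNorm, inv_one, one_mul]

theorem exists_bound_of_rigidApex_one (hS : Submonoid.closure S = ⊤) :
    ∃ C : ℕ, ∀ u v : G, RigidApex (wordDist S) 1 u v →
      wordNorm S u + wordNorm S v + wordNorm S (u⁻¹ * v) ≤ C * wordNorm S (u⁻¹ * v) := by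
  obtain ⟨Γ, hΓ⟩ := WellQuasiOrderedLE.exists_bound_exists_le (IsNontrivialRelation S)
    fun r => ∑ s, r.1 s + ∑ s, r.2 s
  refine ⟨Γ, fun u v hrig => ?_⟩
  obtain ⟨α, hα⟩ := exists_isGeodesicExponent hS u
  obtain ⟨γ, hγ⟩ := exists_isGeodesicExponent hS v
  obtain ⟨η, hη⟩ := exists_isGeodesicExponent hS (u⁻¹ * v)
  have hrel : expProd S γ = expProd S (α + η) := by
    rw [expProd_add, hα.1, hγ.1, hη.1, mul_inv_cancel_left]
  have h := sum_add_sum_le_mul_sum_sub hΓ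
    (fun _ ha _ hb => not_isNontrivialRelation_of_rigidApex_one hS hrig hα hγ ha hb) hrel le_rfl
  simp only [add_tsub_cancel_left, Pi.add_apply, Finset.sum_add_distrib] at h
  rw [← hα.2, ← hγ.2, ← hη.2]
  omega

end ExponentVectors

theorem stmt11_general {G : Type*} [CommGroup G] (S : Set G) (hSfin : S.Finite)
    (hSsym : ∀ s ∈ S, s⁻¹ ∈ S)
    (hgen : Subgroup.closure S = ⊤) :
    ∃ C : ℕ, ∀ x y z : G, RigidTriple (wordDist S) x y z →
      wordDist S x y + wordDist S y z + wordDist S z x ≤ C * wordDist S x y := by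
  have : Fintype S := hSfin.fintype
  have hS : Submonoid.closure S = ⊤ := by
    rw [← Subgroup.closure_toSubmonoid_of_inv_mem hSsym, hgen, Subgroup.top_toSubmonoid]
  obtain ⟨C, hC⟩ := exists_bound_of_rigidApex_one hS
  refine ⟨C, ?_⟩
  rintro x y z ⟨-, -, -, -, -, hz⟩
  have hz₁ : RigidApex (wordDist S) 1 (z⁻¹ * x) (z⁻¹ * y) := by
    simpa using hz.map (Equiv.mulLeft z⁻¹) (wordDist_mul_left z⁻¹)
  have h := hC _ _ hz₁
  rw [show (z⁻¹ * x)⁻¹ * (z⁻¹ * y) = x⁻¹ * y by group] at h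
  rw [wordDist_comm hSsym y z]
  simp only [wordDist_eq_wordNorm]
  omega

/-- Let `G` be a finitely generated abelian group with finite symmetric
generating set `S` (with `1 ∉ S`) and word metric `d`. Then there is a constant `C`
such that every rigid triple `{x,y,z}` satisfies
`d(x,y) + d(y,z) + d(z,x) ≤ C · d(x,y)`. -/
theorem stmt11 {G : Type*} [CommGroup G] (S : Set G) (hSfin : S.Finite)
    (hSsym : ∀ s ∈ S, s⁻¹ ∈ S) (hone : (1 : G) ∉ S)
    (hgen : Subgroup.closure S = ⊤) :
    ∃ C : ℕ, ∀ x y z : G, RigidTriple (wordDist S) x y z →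
      wordDist S x y + wordDist S y z + wordDist S z x ≤ C * wordDist S x y :=
  stmt11_general S hSfin hSsym hgen
end
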